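/- arXiv:1503.05110 — 8 statements merged into one kernel-verified Lean document; each statement's English description precedes it below -/
import Mathlib

section
/- Let G be a finite simple graph, let S' ⊆ V(G) be nonempty, let I ⊆ V(G) \ S' be an independent set of G, and let R_d ⊆ I with |R_d| = l ≥ 1 be such that G[S' ∪ R_d] is connected. Then there exist an ordering r_1, …, r_l of the elements of R_d and a partition ⟨A_1, …, A_l⟩ of the set of connected components of G[S'] into l (possibly empty) classes such that: (1) for every i ∈ {1,…,l}, the vertex r_i has a neighbor in every connected component belonging to A_i, and (2) for every i ∈ {2,…,l}, the vertex r_i has a neighbor in some connected component belonging to A_1 ∪ … ∪ A_{i−1}. -/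
/-- crossing lemma: a `ReflTransGen` chain from inside `T` to outside `T`
crosses the boundary. -/
lemma stmt2_cross {V : Type*} (rel : V → V → Prop) (T : Set V) {u : V} (hu : u ∈ T) :
    ∀ {w}, Relation.ReflTransGen rel u w → w ∉ T → ∃ a ∈ T, ∃ b, b ∉ T ∧ rel a b := by
  intro w h
  induction h with
  | refl => exact fun hw => absurd hu hw
  | @tail c d hc hcd ih =>
    intro hd
    by_cases hcT : c ∈ T
    · exact ⟨c, hcT, d, hd, hcd⟩
    · exact ih hcT

/-- From a connected relation on a finite set of given cardinality, produce an
enumeration in which every later element is related to an earlier one. -/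
lemma stmt2_enum {V : Type*} (rel : V → V → Prop) (Rd : Set V) (hfin : Rd.Finite)
    (l : ℕ) (hl : 1 ≤ l) (hcard : Rd.ncard = l)
    (hmem : ∀ a b, rel a b → b ∈ Rd)
    (hconn : ∀ a ∈ Rd, ∀ b ∈ Rd, Relation.ReflTransGen rel a b) :
    ∃ r : Fin l → V, Function.Injective r ∧ Set.range r = Rd ∧
      ∀ i : Fin l, 0 < i.val → ∃ j : Fin l, j < i ∧ rel (r j) (r i) := by
  have key : ∀ n, n ≤ l → ∃ f : Fin n → V, Function.Injective f ∧ Set.range f ⊆ Rd ∧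
      ∀ i : Fin n, 0 < i.val → ∃ j : Fin n, j < i ∧ rel (f j) (f i) := by
    intro n
    induction n with
    | zero =>
      intro _
      exact ⟨Fin.elim0, fun i => i.elim0, by rintro x ⟨i, _⟩; exact i.elim0,
        fun i => i.elim0⟩
    | succ n ih =>
      intro hn1
      obtain ⟨f, hinj, hsub, hcond⟩ := ih (le_trans (Nat.le_succ n) hn1)
      have hrn : (Set.range f).ncard = n := by
        rw [← Nat.card_coe_set_eq, Nat.card_range_of_injective hinj,
          Nat.card_eq_fintype_card, Fintype.card_fin]
      have hlt : (Set.range f).ncard < Rd.ncard := by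
        rw [hrn, hcard]; omega
      obtain ⟨w, hwRd, hwnr⟩ :=
        Set.exists_mem_notMem_of_ncard_lt_ncard hlt (Set.finite_range f)
      rcases Nat.eq_zero_or_pos n with hn0 | hnpos
      · subst hn0
        refine ⟨fun _ => w, fun a b _ => Fin.ext (by omega), ?_, ?_⟩
        · rintro x ⟨i, rfl⟩; exact hwRd
        · intro i hi; exact absurd i.isLt (by omega)
      · have h0 : f ⟨0, hnpos⟩ ∈ Rd := hsub ⟨⟨0, hnpos⟩, rfl⟩
        have chain := hconn _ h0 w hwRd
        obtain ⟨a, ha, b, hb, hab⟩ :=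
          stmt2_cross rel (Set.range f) ⟨⟨0, hnpos⟩, rfl⟩ chain hwnr
        refine ⟨Fin.snoc f b, ?_, ?_, ?_⟩
        · intro i j hij
          induction i using Fin.lastCases with
          | last =>
            induction j using Fin.lastCases with
            | last => rfl
            | cast j =>
              rw [Fin.snoc_last, Fin.snoc_castSucc] at hij
              exact absurd ⟨j, hij.symm⟩ hb
          | cast i =>
            induction j using Fin.lastCases with
            | last =>
              rw [Fin.snoc_last, Fin.snoc_castSucc] at hij
              exact absurd ⟨i, hij⟩ hb
            | cast j =>
              rw [Fin.snoc_castSucc, Fin.snoc_castSucc] at hij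
              exact congrArg Fin.castSucc (hinj hij)
        · rintro x ⟨i, rfl⟩
          induction i using Fin.lastCases with
          | last => rw [Fin.snoc_last]; exact hmem a b hab
          | cast i => rw [Fin.snoc_castSucc]; exact hsub ⟨i, rfl⟩
        · intro i hi
          induction i using Fin.lastCases with
          | last =>
            obtain ⟨j0, hj0⟩ := ha
            refine ⟨j0.castSucc, Fin.castSucc_lt_last j0, ?_⟩
            rw [Fin.snoc_castSucc, Fin.snoc_last, hj0]
            exact hab
          | cast i0 =>
            have hi0 : 0 < i0.val := by simpa using hi
            obtain ⟨j0, hj, hrel⟩ := hcond i0 hi0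
            refine ⟨j0.castSucc, by simpa using hj, ?_⟩
            rw [Fin.snoc_castSucc, Fin.snoc_castSucc]
            exact hrel
  obtain ⟨f, hinj, hsub, hcond⟩ := key l le_rfl
  have hrn : (Set.range f).ncard = l := by
    rw [← Nat.card_coe_set_eq, Nat.card_range_of_injective hinj,
      Nat.card_eq_fintype_card, Fintype.card_fin]
  have hrange : Set.range f = Rd :=
    Set.eq_of_subset_of_ncard_le hsub (by rw [hrn, hcard]) hfin
  exact ⟨f, hinj, hrange, hcond⟩

/-- The "linked through a common component of `G[S']`" relation on `Rd`. -/
def stmt2_rel {V : Type*} (G : SimpleGraph V) (S' Rd : Set V) : V → V → Prop :=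
  fun a b => a ∈ Rd ∧ b ∈ Rd ∧ ∃ x y : S',
    (G.induce S').Reachable x y ∧ G.Adj a (x : V) ∧ G.Adj b (y : V)

/-- Walk lemma for Step A: from a vertex of `S'` there is a walk to a vertex of `Rd`;
along it we find a vertex of `Rd` adjacent to the component of the start. -/
lemma stmt2_stepA {V : Type*} (G : SimpleGraph V) (S' Rd : Set V)
    (hdisj : ∀ r ∈ Rd, r ∉ S') :
    ∀ (u tb : ↥(S' ∪ Rd)) (_ : (G.induce (S' ∪ Rd)).Walk u tb),
      (tb : V) ∈ Rd → ∀ hu : (u : V) ∈ S',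
      ∃ r ∈ Rd, ∃ x : S', (G.induce S').Reachable x ⟨u, hu⟩ ∧ G.Adj r (x : V) := by
  intro u tb p
  induction p with
  | nil => intro htb hu; exact absurd hu (hdisj _ htb)
  | @cons u v w h q ih =>
    intro htb hu
    have hG : G.Adj (u : V) (v : V) := h
    rcases v.2 with hv | hv
    · obtain ⟨r, hr, x, hx, hadj⟩ := ih htb hv
      refine ⟨r, hr, x, hx.trans ?_, hadj⟩
      exact SimpleGraph.Adj.reachable (show (G.induce S').Adj ⟨v, hv⟩ ⟨u, hu⟩ from hG.symm)
    · exact ⟨v, hv, ⟨u, hu⟩, SimpleGraph.Reachable.refl _, hG.symm⟩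

/-- Walk lemma for Step B: connectivity of the linking relation. -/
lemma stmt2_stepB {V : Type*} (G : SimpleGraph V) (S' Rd : Set V)
    (hdisj : ∀ r ∈ Rd, r ∉ S')
    (hind : ∀ a ∈ Rd, ∀ b ∈ Rd, ¬ G.Adj a b) :
    ∀ (u tb : ↥(S' ∪ Rd)) (_ : (G.induce (S' ∪ Rd)).Walk u tb),
      (tb : V) ∈ Rd → ∀ s ∈ Rd,
      ((u : V) = s ∨ ∃ hu : (u : V) ∈ S', ∃ y : S',
        (G.induce S').Reachable ⟨u, hu⟩ y ∧ G.Adj s (y : V)) →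
      Relation.ReflTransGen (stmt2_rel G S' Rd) s (tb : V) := by
  intro u tb p
  induction p with
  | nil =>
    intro htb s hs hcase
    rcases hcase with hus | ⟨hu, _⟩
    · rw [← hus]
    · exact absurd hu (hdisj _ htb)
  | @cons u v w h q ih =>
    intro htb s hs hcase
    have hG : G.Adj (u : V) (v : V) := h
    rcases hcase with hus | ⟨hu, y, hreach, hsy⟩
    · -- u = s ∈ Rd, so v ∈ S'
      have hvS : (v : V) ∈ S' := by
        rcases v.2 with hv | hv
        · exact hv
        · exact absurd (hus ▸ hG) (hind s hs _ hv)
      refine ih htb s hs (Or.inr ⟨hvS, ⟨v, hvS⟩, SimpleGraph.Reachable.refl _, ?_⟩)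
      rw [← hus]; exact hG
    · rcases v.2 with hvS | hvR
      · refine ih htb s hs (Or.inr ⟨hvS, y, ?_, hsy⟩)
        exact (SimpleGraph.Adj.reachable
          (show (G.induce S').Adj ⟨v, hvS⟩ ⟨u, hu⟩ from hG.symm)).trans hreach
      · have hrel : stmt2_rel G S' Rd s (v : V) :=
          ⟨hs, hvR, y, ⟨u, hu⟩, hreach.symm, hsy, hG.symm⟩
        exact Relation.ReflTransGen.head hrel (ih htb (v : V) hvR (Or.inl rfl))

/-- If `S'` is nonempty, `I ⊆ V(G) \ S'` is an independent set and
`R_d ⊆ I` with `|R_d| = l ≥ 1` is such that `G[S' ∪ R_d]` is connected, then there is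
an ordering `r_1, …, r_l` of `R_d` and an assignment `A` of the connected components of
`G[S']` to the classes `1, …, l` such that (1) `r i` has a neighbor in every component
assigned to class `i`, and (2) for `i ≥ 2`, `r i` has a neighbor in some component
assigned to a class `< i`. -/
theorem stmt_2 {V : Type*} [Fintype V] (G : SimpleGraph V)
    (S' : Set V) (hS'ne : S'.Nonempty)
    (I : Set V) (hIind : ∀ u ∈ I, ∀ v ∈ I, ¬ G.Adj u v) (hIdisj : I ⊆ S'ᶜ)
    (Rd : Set V) (hRd : Rd ⊆ I)
    (l : ℕ) (hl : 1 ≤ l) (hcard : Nat.card Rd = l)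
    (hconn : (G.induce (S' ∪ Rd)).Connected) :
    ∃ r : Fin l → V, Function.Injective r ∧ Set.range r = Rd ∧
      ∃ A : (G.induce S').ConnectedComponent → Fin l,
        (∀ K : (G.induce S').ConnectedComponent,
          ∃ x : S', (G.induce S').connectedComponentMk x = K ∧ G.Adj (r (A K)) (x : V)) ∧
        (∀ i : Fin l, 0 < i.val →
          ∃ x : S', A ((G.induce S').connectedComponentMk x) < i ∧ G.Adj (r i) (x : V)) := by
  classical
  have hdisj : ∀ r ∈ Rd, r ∉ S' := fun r hr => hIdisj (hRd hr)
  have hind : ∀ a ∈ Rd, ∀ b ∈ Rd, ¬ G.Adj a b :=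
    fun a ha b hb => hIind a (hRd ha) b (hRd hb)
  have hRdne : Rd.Nonempty := by
    have : 0 < Nat.card Rd := by omega
    have := Nat.card_pos_iff.mp this
    exact Set.nonempty_coe_sort.mp this.1
  obtain ⟨r0, hr0⟩ := hRdne
  have hfin : Rd.Finite := Set.toFinite Rd
  have hncard : Rd.ncard = l := by rw [← Nat.card_coe_set_eq] at *; exact hcard
  -- Step A: every component of G[S'] has a neighbour in Rd
  have hA : ∀ x0 : S', ∃ r ∈ Rd, ∃ x : S',
      (G.induce S').Reachable x x0 ∧ G.Adj r (x : V) := by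
    intro x0
    have hx0 : (x0 : V) ∈ S' ∪ Rd := Or.inl x0.2
    obtain ⟨p⟩ := hconn.preconnected ⟨x0, hx0⟩ ⟨r0, Or.inr hr0⟩
    obtain ⟨r, hr, x, hx, hadj⟩ := stmt2_stepA G S' Rd hdisj _ _ p hr0 x0.2
    exact ⟨r, hr, x, hx, hadj⟩
  -- Step B: the linking relation is connected on Rd
  have hB : ∀ a ∈ Rd, ∀ b ∈ Rd, Relation.ReflTransGen (stmt2_rel G S' Rd) a b := by
    intro a ha b hb
    obtain ⟨p⟩ := hconn.preconnected ⟨a, Or.inr ha⟩ ⟨b, Or.inr hb⟩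
    exact stmt2_stepB G S' Rd hdisj hind _ _ p hb a ha (Or.inl rfl)
  -- enumeration
  obtain ⟨r, hinj, hrange, hcond⟩ := stmt2_enum (stmt2_rel G S' Rd) Rd hfin l hl hncard
    (fun a b hab => hab.2.1) hB
  refine ⟨r, hinj, hrange, ?_⟩
  set P : (G.induce S').ConnectedComponent → Fin l → Prop :=
    fun K i => ∃ x : S', (G.induce S').connectedComponentMk x = K ∧ G.Adj (r i) (x : V)
    with hP
  have hne : ∀ K, (Finset.univ.filter (P K)).Nonempty := by
    intro K
    obtain ⟨x0, rfl⟩ := K.exists_rep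
    obtain ⟨rr, hrr, x, hx, hadj⟩ := hA x0
    obtain ⟨i, rfl⟩ : rr ∈ Set.range r := hrange ▸ hrr
    refine ⟨i, Finset.mem_filter.mpr ⟨Finset.mem_univ _, x, ?_, hadj⟩⟩
    exact SimpleGraph.ConnectedComponent.sound hx
  refine ⟨fun K => (Finset.univ.filter (P K)).min' (hne K), ?_, ?_⟩
  · intro K
    have := Finset.min'_mem (Finset.univ.filter (P K)) (hne K)
    exact (Finset.mem_filter.mp this).2
  · intro i hi
    obtain ⟨j, hji, hrel⟩ := hcond i hi
    obtain ⟨_, _, x, y, hxy, hjx, hiy⟩ := hrel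
    refine ⟨y, ?_, hiy⟩
    have hjmem : j ∈ Finset.univ.filter (P ((G.induce S').connectedComponentMk y)) :=
      Finset.mem_filter.mpr ⟨Finset.mem_univ _, x,
        SimpleGraph.ConnectedComponent.sound hxy, hjx⟩
    exact lt_of_le_of_lt (Finset.min'_le _ j hjmem) hji
end

section
/- Let G be a finite simple graph whose vertex set is partitioned as V(G) = X ⊎ S_1 ⊎ … ⊎ S_q, where for all a ≠ b every vertex of S_a is adjacent in G to every vertex of S_b. Let i ≠ j, let s ∈ S_i and t ∈ S_j, and let G' be the graph on vertex set V(G) \ {s, t} whose edges are all edges of G between vertices of V(G) \ {s, t} together with all pairs of distinct vertices lying in the same set S_a. Then for every Y ⊆ V(G) \ {s, t} that contains at least one vertex of S_1 ∪ … ∪ S_q: if the induced subgraph G'[Y] is connected, then the induced subgraph G[Y ∪ {s, t}] is connected. -/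
/-- Let `V(G) = X ⊎ S_1 ⊎ … ⊎ S_q` where vertices of distinct `S_a`,
`S_b` are always adjacent. Let `s ∈ S_i`, `t ∈ S_j` with `i ≠ j`, and let `G'` be the
graph on `V(G) \ {s, t}` whose edges are the edges of `G` together with all pairs of
distinct vertices inside a common `S_a`. Then for every `Y ⊆ V(G) \ {s, t}` containing
a vertex of some `S_a`: if `G'[Y]` is connected then `G[Y ∪ {s, t}]` is connected. -/
theorem stmt_4 {V : Type*} [Fintype V] (G : SimpleGraph V)
    (q : ℕ) (X : Set V) (S : Fin q → Set V)
    (hcover : X ∪ ⋃ a, S a = Set.univ)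
    (hXS : ∀ a, Disjoint X (S a))
    (hSS : ∀ a b, a ≠ b → Disjoint (S a) (S b))
    (hcross : ∀ a b, a ≠ b → ∀ u ∈ S a, ∀ v ∈ S b, G.Adj u v)
    (i j : Fin q) (hij : i ≠ j) (s t : V) (hs : s ∈ S i) (ht : t ∈ S j)
    (Y : Set V) (hY : Y ⊆ ({s, t} : Set V)ᶜ) (hYne : ∃ y ∈ Y, ∃ a, y ∈ S a) :
    ((SimpleGraph.fromRel
        (fun u v => G.Adj u v ∨ ∃ a, u ∈ S a ∧ v ∈ S a)).induce Y).Connected →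
      (G.induce (Y ∪ {s, t})).Connected := by
  intro hconn
  set U : Set V := Y ∪ {s, t} with hU
  have hst : G.Adj s t := hcross i j hij s hs t ht
  have hsU : s ∈ U := Or.inr (Or.inl rfl)
  have htU : t ∈ U := Or.inr (Or.inr rfl)
  have hYst : ∀ y ∈ Y, y ≠ s ∧ y ≠ t := by
    intro y hy
    have := hY hy
    simp only [Set.mem_compl_iff, Set.mem_insert_iff, Set.mem_singleton_iff] at this
    tauto
  -- a vertex of U adjacent to both u and v gives reachability
  have mid : ∀ (w : V) (hw : w ∈ U) (u v : V) (hu : u ∈ U) (hv : v ∈ U),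
      G.Adj u w → G.Adj w v →
      (G.induce U).Reachable ⟨u, hu⟩ ⟨v, hv⟩ := by
    intro w hw u v hu hv h1 h2
    have e1 : (G.induce U).Adj ⟨u, hu⟩ ⟨w, hw⟩ := h1
    have e2 : (G.induce U).Adj ⟨w, hw⟩ ⟨v, hv⟩ := h2
    exact e1.reachable.trans e2.reachable
  -- each edge of G' between vertices of Y yields reachability in G.induce U
  have key : ∀ (u v : V) (hu : u ∈ Y) (hv : v ∈ Y),
      (SimpleGraph.fromRel
        (fun u v => G.Adj u v ∨ ∃ a, u ∈ S a ∧ v ∈ S a)).Adj u v →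
      (G.induce U).Reachable ⟨u, Or.inl hu⟩ ⟨v, Or.inl hv⟩ := by
    intro u v hu hv hadj
    rw [SimpleGraph.fromRel_adj] at hadj
    obtain ⟨hne, hr⟩ := hadj
    have hGcase : ∀ (h : G.Adj u v), (G.induce U).Reachable ⟨u, Or.inl hu⟩ ⟨v, Or.inl hv⟩ := by
      intro h
      exact SimpleGraph.Adj.reachable (by exact h : (G.induce U).Adj ⟨u, Or.inl hu⟩ ⟨v, Or.inl hv⟩)
    have hScase : ∀ a : Fin q, u ∈ S a → v ∈ S a →
        (G.induce U).Reachable ⟨u, Or.inl hu⟩ ⟨v, Or.inl hv⟩ := by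
      intro a hua hva
      by_cases ha : a = i
      · -- go through t
        have haj : a ≠ j := ha ▸ hij
        exact mid t htU u v _ _ (hcross a j haj u hua t ht) (hcross a j haj v hva t ht).symm
      · -- go through s
        exact mid s hsU u v _ _ (hcross a i ha u hua s hs) (hcross a i ha v hva s hs).symm
    rcases hr with (h | ⟨a, h1, h2⟩) | (h | ⟨a, h1, h2⟩)
    · exact hGcase h
    · exact hScase a h1 h2
    · exact hGcase h.symm
    · exact hScase a h2 h1
  -- transport reachability from G'[Y] to G[U]
  have map : ∀ x y : {v // v ∈ Y},
      ((SimpleGraph.fromRel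
        (fun u v => G.Adj u v ∨ ∃ a, u ∈ S a ∧ v ∈ S a)).induce Y).Reachable x y →
      (G.induce U).Reachable ⟨x.1, Or.inl x.2⟩ ⟨y.1, Or.inl y.2⟩ := by
    intro x y h
    obtain ⟨w⟩ := h
    induction w with
    | nil => exact SimpleGraph.Reachable.refl _
    | @cons a b c h p ih =>
        exact (key a.1 b.1 a.2 b.2 h).trans ih
  obtain ⟨y0, hy0Y, a0, hy0S⟩ := hYne
  have hy0U : y0 ∈ U := Or.inl hy0Y
  -- s reaches y0
  have hsy0 : (G.induce U).Reachable ⟨s, hsU⟩ ⟨y0, hy0U⟩ := by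
    by_cases ha : a0 = i
    · have haj : a0 ≠ j := ha ▸ hij
      exact mid t htU s y0 hsU hy0U hst (hcross a0 j haj y0 hy0S t ht).symm
    · have e : (G.induce U).Adj ⟨s, hsU⟩ ⟨y0, hy0U⟩ := (hcross a0 i ha y0 hy0S s hs).symm
      exact e.reachable
  have hty0 : (G.induce U).Reachable ⟨t, htU⟩ ⟨y0, hy0U⟩ := by
    by_cases ha : a0 = j
    · have hai : a0 ≠ i := by
        intro h; exact hij (h ▸ ha)
      exact mid s hsU t y0 htU hy0U hst.symm (hcross a0 i hai y0 hy0S s hs).symm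
    · have e : (G.induce U).Adj ⟨t, htU⟩ ⟨y0, hy0U⟩ := (hcross a0 j ha y0 hy0S t ht).symm
      exact e.reachable
  -- every vertex reaches y0
  have all : ∀ x : {v // v ∈ U}, (G.induce U).Reachable x ⟨y0, hy0U⟩ := by
    rintro ⟨x, hx | hx⟩
    · exact map ⟨x, hx⟩ ⟨y0, hy0Y⟩ (hconn.preconnected _ _)
    · rcases hx with hx | hx
      · subst hx; exact hsy0
      · simp only [Set.mem_singleton_iff] at hx
        subst hx; exact hty0
  haveI : Nonempty ↑U := ⟨⟨y0, hy0U⟩⟩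
  exact SimpleGraph.Connected.mk (fun u v => (all u).trans (all v).symm)
end

section
/- Let X be a finite set with |X| = n, let S_1, …, S_m ⊆ X, and let t be an integer with 1 ≤ t ≤ n. Let G be the split graph on vertex set X ⊎ {1,…,m} in which any two distinct elements of X are adjacent, no two indices in {1,…,m} are adjacent, and x ∈ X is adjacent to j ∈ {1,…,m} if and only if x ∈ S_j. Color every vertex of X with color 1 and every vertex of {1,…,m} with color 2, and let M be the multiset containing color 1 with multiplicity t and color 2 with multiplicity m. Then there exists a hitting set H ⊆ X with |H| ≤ t and H ∩ S_j ≠ ∅ for every j ∈ {1,…,m} if and only if (G, c, M) has a motif solution. -/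
/-- A motif solution of an instance `(G, c, M)`: a set `R` of vertices such that the
induced subgraph `G[R]` is connected and the multiset of colors of `R` equals `M`. -/
def IsMotifSolution {V C : Type*} (G : SimpleGraph V) (c : V → C) (M : Multiset C)
    (R : Finset V) : Prop :=
  (G.induce (R : Set V)).Connected ∧ Multiset.map c R.val = M

/-- Reduction from Hitting Set: the split graph `G` has a clique on the
elements `X` (color 1), an independent set on the set-indices (color 2), and `x` adjacent
to `j` iff `x ∈ S_j`. With motif `M = {1^t, 2^m}` (`1 ≤ t ≤ n = |X|`), there is a hitting
set of size at most `t` iff `(G, c, M)` has a motif solution. -/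
theorem stmt_6 {X : Type*} [Fintype X] [DecidableEq X] (n m t : ℕ)
    (hn : Fintype.card X = n) (S : Fin m → Set X) (ht : 1 ≤ t) (htn : t ≤ n) :
    (∃ H : Finset X, H.card ≤ t ∧ ∀ j : Fin m, ∃ x ∈ H, x ∈ S j) ↔
    ∃ R : Finset (X ⊕ Fin m),
      IsMotifSolution
        (SimpleGraph.fromRel (fun a b =>
          (∃ x y : X, a = Sum.inl x ∧ b = Sum.inl y) ∨
          (∃ (x : X) (j : Fin m), a = Sum.inl x ∧ b = Sum.inr j ∧ x ∈ S j)))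
        (Sum.elim (fun _ => (1 : ℕ)) (fun _ => (2 : ℕ)))
        (Multiset.replicate t 1 + Multiset.replicate m 2) R := by
  classical
  set rel : (X ⊕ Fin m) → (X ⊕ Fin m) → Prop := fun a b =>
          (∃ x y : X, a = Sum.inl x ∧ b = Sum.inl y) ∨
          (∃ (x : X) (j : Fin m), a = Sum.inl x ∧ b = Sum.inr j ∧ x ∈ S j) with hrel
  set G : SimpleGraph (X ⊕ Fin m) := SimpleGraph.fromRel rel with hG
  set c : (X ⊕ Fin m) → ℕ := Sum.elim (fun _ => (1 : ℕ)) (fun _ => (2 : ℕ)) with hc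
  have hadjLL : ∀ x y : X, x ≠ y → G.Adj (Sum.inl x) (Sum.inl y) := by
    intro x y hxy
    exact ⟨by simpa using hxy, Or.inl (Or.inl ⟨x, y, rfl, rfl⟩)⟩
  have hadjLR : ∀ (x : X) (j : Fin m), x ∈ S j → G.Adj (Sum.inl x) (Sum.inr j) := by
    intro x j hx
    exact ⟨by simp, Or.inl (Or.inr ⟨x, j, rfl, rfl, hx⟩)⟩
  constructor
  · rintro ⟨H, hHt, hhit⟩
    obtain ⟨H', hHH', -, hH'⟩ := Finset.exists_subsuperset_card_eq (H.subset_univ) hHt (by rw [Finset.card_univ, hn]; exact htn)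
    have hdisj : Disjoint (H'.map ⟨Sum.inl, Sum.inl_injective⟩)
        ((Finset.univ : Finset (Fin m)).map ⟨Sum.inr, Sum.inr_injective⟩) := by
      simp [Finset.disjoint_left]
    refine ⟨(H'.map ⟨Sum.inl, Sum.inl_injective⟩).disjUnion
        ((Finset.univ : Finset (Fin m)).map ⟨Sum.inr, Sum.inr_injective⟩) hdisj, ?_, ?_⟩
    · -- connectivity
      set R := (H'.map ⟨Sum.inl, Sum.inl_injective⟩).disjUnion
        ((Finset.univ : Finset (Fin m)).map ⟨Sum.inr, Sum.inr_injective⟩) hdisj with hR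
      have hmemL : ∀ x : X, Sum.inl x ∈ R ↔ x ∈ H' := by simp [hR]
      have hmemR : ∀ j : Fin m, Sum.inr j ∈ R := by simp [hR]
      have hH'ne : H'.Nonempty := Finset.card_pos.mp (by rw [hH']; omega)
      obtain ⟨x0, hx0⟩ := hH'ne
      have hv0 : Sum.inl x0 ∈ (R : Set (X ⊕ Fin m)) := by simpa using (hmemL x0).2 hx0
      have key : ∀ v : (R : Set (X ⊕ Fin m)), (G.induce (R : Set (X ⊕ Fin m))).Reachable v ⟨Sum.inl x0, hv0⟩ := by
        rintro ⟨v, hv⟩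
        match v with
        | Sum.inl x =>
          by_cases hxx : x = x0
          · subst hxx; exact SimpleGraph.Reachable.refl _
          · exact (SimpleGraph.Adj.reachable (by simpa using hadjLL x x0 hxx))
        | Sum.inr j =>
          obtain ⟨x, hxH, hxS⟩ := hhit j
          have hxH' : x ∈ H' := hHH' hxH
          have h1 : (G.induce (R : Set (X ⊕ Fin m))).Adj ⟨Sum.inr j, hv⟩ ⟨Sum.inl x, by simpa using (hmemL x).2 hxH'⟩ := by
            simpa using (hadjLR x j hxS).symm
          refine h1.reachable.trans ?_
          by_cases hxx : x = x0
          · subst hxx; exact SimpleGraph.Reachable.refl _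
          · exact (SimpleGraph.Adj.reachable (by simpa using hadjLL x x0 hxx))
      exact SimpleGraph.connected_iff_exists_forall_reachable _ |>.mpr
        ⟨⟨Sum.inl x0, hv0⟩, fun w => (key w).symm⟩
    · -- multiset
      rw [show ((H'.map ⟨Sum.inl, Sum.inl_injective⟩).disjUnion
        ((Finset.univ : Finset (Fin m)).map ⟨Sum.inr, Sum.inr_injective⟩) hdisj).val
        = (H'.map ⟨Sum.inl, Sum.inl_injective⟩).val
          + ((Finset.univ : Finset (Fin m)).map ⟨Sum.inr, Sum.inr_injective⟩).val from rfl,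
        Multiset.map_add]
      congr 1
      · rw [Finset.map_val, Multiset.map_map]
        have : (c ∘ Sum.inl) = fun _ : X => (1 : ℕ) := rfl
        rw [show ((fun a => c a) ∘ (⟨Sum.inl, Sum.inl_injective⟩ : X ↪ X ⊕ Fin m)) = fun _ : X => (1:ℕ) from rfl]
        rw [Multiset.map_const']
        exact congrArg (fun k => Multiset.replicate k 1) hH'
      · rw [Finset.map_val, Multiset.map_map]
        rw [show ((fun a => c a) ∘ (⟨Sum.inr, Sum.inr_injective⟩ : Fin m ↪ X ⊕ Fin m)) = fun _ : Fin m => (2:ℕ) from rfl]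
        rw [Multiset.map_const']
        simp
  · rintro ⟨R, hconn, hmap⟩
    set H : Finset X := Finset.univ.filter (fun x => Sum.inl x ∈ R) with hH
    have hfilterL : H.map ⟨Sum.inl, Sum.inl_injective⟩ = R.filter (fun v => (1:ℕ) = c v) := by
      ext v
      cases v with
      | inl x =>
        simp only [Finset.mem_map, Finset.mem_filter, hH, Finset.mem_univ, true_and,
          Function.Embedding.coeFn_mk]
        constructor
        · rintro ⟨a, ha, h⟩
          obtain rfl : a = x := by simpa using h
          exact ⟨ha, rfl⟩
        · rintro ⟨h1, -⟩
          exact ⟨x, h1, rfl⟩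
      | inr j =>
        simp only [Finset.mem_map, Finset.mem_filter, Function.Embedding.coeFn_mk]
        constructor
        · rintro ⟨a, -, h⟩; cases h
        · rintro ⟨-, h⟩; cases h
    have hcount1 : (Multiset.map c R.val).count 1 = t := by
      rw [hmap]; simp [Multiset.count_replicate]
    have hcount2 : (Multiset.map c R.val).count 2 = m := by
      rw [hmap]; simp [Multiset.count_replicate]
    have hHcard : H.card = t := by
      rw [Multiset.count_map] at hcount1
      calc H.card = (H.map ⟨Sum.inl, Sum.inl_injective⟩).card := (Finset.card_map _).symm
        _ = (R.filter (fun v => (1:ℕ) = c v)).card := by rw [hfilterL]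
        _ = t := by rw [← hcount1, Finset.card, Finset.filter_val]
    -- all inr vertices are in R
    have hsub : R.filter (fun v => (2:ℕ) = c v) ⊆
        (Finset.univ : Finset (Fin m)).map ⟨Sum.inr, Sum.inr_injective⟩ := by
      intro v hv
      rw [Finset.mem_filter] at hv
      cases v with
      | inl x => exact absurd hv.2 (by simp [hc])
      | inr j => simp
    have hcardfilter : (R.filter (fun v => (2:ℕ) = c v)).card = m := by
      rw [Multiset.count_map] at hcount2
      rw [Finset.card, Finset.filter_val]; exact hcount2
    have hRr := Finset.eq_of_subset_of_card_le hsub (by simp [hcardfilter])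
    have hinrR : ∀ j : Fin m, Sum.inr j ∈ R := by
      intro j
      have hj : Sum.inr j ∈ R.filter (fun v => (2:ℕ) = c v) := by
        rw [hRr]; simp
      exact (Finset.mem_filter.mp hj).1
    -- a left vertex in R
    have hHne : H.Nonempty := Finset.card_pos.mp (by omega)
    obtain ⟨x0, hx0⟩ := hHne
    have hx0R : Sum.inl x0 ∈ R := (Finset.mem_filter.mp hx0).2
    refine ⟨H, le_of_eq hHcard, ?_⟩
    intro j
    have hne : (⟨Sum.inr j, by simpa using hinrR j⟩ : (R : Set (X ⊕ Fin m))) ≠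
        ⟨Sum.inl x0, by simpa using hx0R⟩ := by
      intro h
      simpa using congrArg Subtype.val h
    obtain ⟨p⟩ := hconn.preconnected ⟨Sum.inr j, by simpa using hinrR j⟩
      ⟨Sum.inl x0, by simpa using hx0R⟩
    obtain ⟨w, hadj, q, -⟩ := SimpleGraph.Walk.not_nil_iff.mp
      (SimpleGraph.Walk.not_nil_of_ne (p := p) hne)
    have hadj' : G.Adj (Sum.inr j) (w : X ⊕ Fin m) := hadj
    obtain ⟨hne', hrel'⟩ := hadj'
    rcases hrel' with h | h
    · rcases h with ⟨x, y, h1, -⟩ | ⟨x, j', h1, -⟩ <;> cases h1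
    · rcases h with ⟨x, y, -, h2⟩ | ⟨x, j', h1, h2, h3⟩
      · cases h2
      · obtain rfl : j' = j := by simpa using h2.symm
        refine ⟨x, ?_, h3⟩
        have hwR : (w : X ⊕ Fin m) ∈ R := by simpa using w.2
        rw [hH]
        simp only [Finset.mem_filter, Finset.mem_univ, true_and]
        rw [← h1]
        exact hwR
end

section
/- Let X be a finite set with |X| = n, let S_1, …, S_m ⊆ X, and let t be an integer with 1 ≤ t ≤ m. Let G be the split graph on vertex set X ⊎ {1,…,m} in which any two distinct indices of {1,…,m} are adjacent, no two elements of X are adjacent, and x ∈ X is adjacent to j ∈ {1,…,m} if and only if x ∈ S_j. Color every vertex of X with color 1 and every vertex of {1,…,m} with color 2, and let M be the multiset containing color 1 with multiplicity n and color 2 with multiplicity t. Then there exists a set cover 𝒯 ⊆ {1,…,m} with |𝒯| ≤ t and ⋃_{j ∈ 𝒯} S_j = X if and only if (G, c, M) has a motif solution. -/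
section

open Finset SimpleGraph Sum

variable {X ι : Type*} {S : ι → Set X}

lemma map_sumElim_const_disjSum {α β γ : Type*} (A : Finset α) (B : Finset β) (a b : γ) :
    (A.disjSum B).val.map (Sum.elim (fun _ => a) fun _ => b) =
      Multiset.replicate #A a + Multiset.replicate #B b := by
  simp [disjSum, Multiset.map_disjSum, Multiset.map_const']

lemma Multiset.replicate_add_replicate_inj {γ : Type*} {a b : γ} (hab : a ≠ b) {k l k' l' : ℕ} :
    replicate k a + replicate l b = replicate k' a + replicate l' b ↔ k = k' ∧ l = l' := by
  classical
  refine ⟨fun h => ⟨?_, ?_⟩, by rintro ⟨rfl, rfl⟩; rfl⟩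
  · simpa [count_replicate, hab, hab.symm] using congrArg (count a) h
  · simpa [count_replicate, hab, hab.symm] using congrArg (count b) h

lemma exists_cover_card_le_iff_exists_cover_card_eq [Fintype ι] {t : ℕ} (ht : t ≤ Fintype.card ι) :
    (∃ T : Finset ι, #T ≤ t ∧ ∀ x, ∃ j ∈ T, x ∈ S j) ↔
      ∃ T : Finset ι, #T = t ∧ ∀ x, ∃ j ∈ T, x ∈ S j := by
  refine ⟨?_, fun ⟨T, hT, hcov⟩ => ⟨T, hT.le, hcov⟩⟩
  rintro ⟨T, hT, hcov⟩
  obtain ⟨T', hTT', -, hT'⟩ := exists_subsuperset_card_eq (subset_univ T) hT (by simpa using ht)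
  exact ⟨T', hT', fun x => (hcov x).imp fun j ⟨hj, hxj⟩ => ⟨hTT' hj, hxj⟩⟩

def setCoverGraph (S : ι → Set X) : SimpleGraph (X ⊕ ι) :=
  fromRel fun a b =>
    (∃ j j' : ι, a = inr j ∧ b = inr j') ∨ (∃ (x : X) (j : ι), a = inl x ∧ b = inr j ∧ x ∈ S j)

@[simp] lemma setCoverGraph_adj_inl_inl {x y : X} : ¬(setCoverGraph S).Adj (inl x) (inl y) := by
  simp [setCoverGraph]

@[simp] lemma setCoverGraph_adj_inl_inr {x : X} {j : ι} :
    (setCoverGraph S).Adj (inl x) (inr j) ↔ x ∈ S j := by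
  simp [setCoverGraph]

@[simp] lemma setCoverGraph_adj_inr_inr {j j' : ι} :
    (setCoverGraph S).Adj (inr j) (inr j') ↔ j ≠ j' := by
  simp [setCoverGraph]

lemma connected_induce_setCoverGraph_iff {A : Finset X} {B : Finset ι} (hB : B.Nonempty) :
    ((setCoverGraph S).induce (A.disjSum B : Set (X ⊕ ι))).Connected ↔
      ∀ x ∈ A, ∃ j ∈ B, x ∈ S j := by
  obtain ⟨j₀, hj₀⟩ := hB
  have hub : inr j₀ ∈ (A.disjSum B : Set (X ⊕ ι)) := by simpa using hj₀
  constructor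
  · intro hconn x hx
    have hxR : inl x ∈ (A.disjSum B : Set (X ⊕ ι)) := by simpa using hx
    have : Nontrivial (A.disjSum B : Set (X ⊕ ι)) :=
      ⟨⟨⟨_, hxR⟩, ⟨_, hub⟩, by simp⟩⟩
    obtain ⟨⟨w | j, hw⟩, hadj⟩ := hconn.preconnected.exists_adj_of_nontrivial ⟨_, hxR⟩
    · simp at hadj
    · exact ⟨j, by simpa using hw, by simpa using hadj⟩
  · intro hcov
    have reach_hub : ∀ v, ((setCoverGraph S).induce (A.disjSum B : Set (X ⊕ ι))).Reachable v
        ⟨_, hub⟩ := by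
      have reach_inr : ∀ j (hj : inr j ∈ (A.disjSum B : Set (X ⊕ ι))),
          ((setCoverGraph S).induce (A.disjSum B : Set (X ⊕ ι))).Reachable ⟨_, hj⟩ ⟨_, hub⟩ := by
        intro j hj
        by_cases hjj : j = j₀
        · subst hjj; rfl
        · exact Adj.reachable (by simpa using hjj)
      rintro ⟨x | j, hv⟩
      · obtain ⟨j, hj, hxj⟩ := hcov x (by simpa using hv)
        have hjR : inr j ∈ (A.disjSum B : Set (X ⊕ ι)) := by simpa using hj
        have hadj :
            ((setCoverGraph S).induce (A.disjSum B : Set (X ⊕ ι))).Adj ⟨_, hv⟩ ⟨_, hjR⟩ := by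
          simpa using hxj
        exact hadj.reachable.trans (reach_inr j hjR)
      · exact reach_inr j hv
    have : Nonempty (A.disjSum B : Set (X ⊕ ι)) := ⟨⟨_, hub⟩⟩
    exact Connected.mk fun u v => (reach_hub u).trans (reach_hub v).symm

lemma isMotifSolution_setCoverGraph_disjSum_iff [Fintype X] {t : ℕ} (ht : 1 ≤ t) {A : Finset X}
    {B : Finset ι} :
    IsMotifSolution (setCoverGraph S) (Sum.elim (fun _ => 1) fun _ => 2)
        (Multiset.replicate (Fintype.card X) 1 + Multiset.replicate t 2) (A.disjSum B) ↔
      A = univ ∧ #B = t ∧ ∀ x, ∃ j ∈ B, x ∈ S j := by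
  rw [IsMotifSolution, map_sumElim_const_disjSum,
    Multiset.replicate_add_replicate_inj (by decide : (1 : ℕ) ≠ 2), card_eq_iff_eq_univ]
  constructor
  · rintro ⟨hconn, rfl, hB⟩
    have hne : B.Nonempty := card_pos.1 (hB ▸ ht)
    exact ⟨rfl, hB, by simpa using (connected_induce_setCoverGraph_iff hne).1 hconn⟩
  · rintro ⟨rfl, hB, hcov⟩
    have hne : B.Nonempty := card_pos.1 (hB ▸ ht)
    exact ⟨(connected_induce_setCoverGraph_iff hne).2 fun x _ => hcov x, rfl, hB⟩

end

theorem stmt_7_general {X : Type*} [Fintype X] (n m t : ℕ)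
    (hn : Fintype.card X = n) (S : Fin m → Set X) (ht : 1 ≤ t) (htm : t ≤ m) :
    (∃ T : Finset (Fin m), T.card ≤ t ∧ ∀ x : X, ∃ j ∈ T, x ∈ S j) ↔
    ∃ R : Finset (X ⊕ Fin m),
      IsMotifSolution
        (SimpleGraph.fromRel (fun a b =>
          (∃ j j' : Fin m, a = Sum.inr j ∧ b = Sum.inr j') ∨
          (∃ (x : X) (j : Fin m), a = Sum.inl x ∧ b = Sum.inr j ∧ x ∈ S j)))
        (Sum.elim (fun _ => (1 : ℕ)) (fun _ => (2 : ℕ)))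
        (Multiset.replicate n 1 + Multiset.replicate t 2) R := by
  subst hn
  rw [exists_cover_card_le_iff_exists_cover_card_eq (by simpa using htm)]
  change _ ↔ ∃ R, IsMotifSolution (setCoverGraph S) _ _ R
  constructor
  · rintro ⟨T, hT, hcov⟩
    exact ⟨Finset.univ.disjSum T, (isMotifSolution_setCoverGraph_disjSum_iff ht).2 ⟨rfl, hT, hcov⟩⟩
  · rintro ⟨R, hR⟩
    rw [← Finset.toLeft_disjSum_toRight (u := R),
      isMotifSolution_setCoverGraph_disjSum_iff ht] at hR
    exact ⟨R.toRight, hR.2⟩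

/-- Reduction from Set Cover: the split graph `G` has a clique on the
set-indices (color 2), an independent set on the elements `X` (color 1), and `x` adjacent
to `j` iff `x ∈ S_j`. With motif `M = {1^n, 2^t}` (`1 ≤ t ≤ m`, `n = |X|`), there is a
set cover of size at most `t` iff `(G, c, M)` has a motif solution. -/
theorem stmt_7 {X : Type*} [Fintype X] [DecidableEq X] (n m t : ℕ)
    (hn : Fintype.card X = n) (S : Fin m → Set X) (ht : 1 ≤ t) (htm : t ≤ m) :
    (∃ T : Finset (Fin m), T.card ≤ t ∧ ∀ x : X, ∃ j ∈ T, x ∈ S j) ↔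
    ∃ R : Finset (X ⊕ Fin m),
      IsMotifSolution
        (SimpleGraph.fromRel (fun a b =>
          (∃ j j' : Fin m, a = Sum.inr j ∧ b = Sum.inr j') ∨
          (∃ (x : X) (j : Fin m), a = Sum.inl x ∧ b = Sum.inr j ∧ x ∈ S j)))
        (Sum.elim (fun _ => (1 : ℕ)) (fun _ => (2 : ℕ)))
        (Multiset.replicate n 1 + Multiset.replicate t 2) R :=
  stmt_7_general n m t hn S ht htm
end

section
/- Let (G, c, M) be an instance of Graph Motif with M nonempty, let r ∈ V(G), and let x, y be two distinct colors that do not occur in M and are not values of c. Let G' be the graph on vertex set V(G) ⊎ {u, s, t} whose edges are the edges of G together with {s, t}, {t, r}, and {u, w} for every w ∈ V(G); let c' agree with c on V(G) and set c'(t) = c'(u) = x and c'(s) = y; and let M' = M ∪ {x, y}. Then (G, c, M) has a motif solution R with r ∈ R if and only if (G', c', M') has a motif solution. Moreover, {u, t} is a dominating set of G' of size 2. -/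
/-- The graph `G'` of Statement 8: vertices `V ⊎ {u, s, t}` (with `u = inr 0`,
`s = inr 1`, `t = inr 2`), edges those of `G` plus `{s,t}`, `{t,r}` and `{u,w}` for
every `w ∈ V`. -/
def domGraph {V : Type*} (G : SimpleGraph V) (r : V) : SimpleGraph (V ⊕ Fin 3) :=
  SimpleGraph.fromRel (fun a b =>
    (∃ w w' : V, a = Sum.inl w ∧ b = Sum.inl w' ∧ G.Adj w w') ∨
    (a = Sum.inr 1 ∧ b = Sum.inr 2) ∨
    (a = Sum.inr 2 ∧ b = Sum.inl r) ∨
    (∃ w : V, a = Sum.inr 0 ∧ b = Sum.inl w))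

/-- The coloring `c'` of Statement 8: agrees with `c` on `V`, colors `u` and `t`
with `x`, and `s` with `y`. -/
def domColor {V D : Type*} (c : V → D) (x y : D) : V ⊕ Fin 3 → D :=
  Sum.elim c (fun i => if i = 1 then y else x)

open Sum

lemma domGraph_adj_iff {V : Type*} (G : SimpleGraph V) (r : V) (p q : V ⊕ Fin 3) :
    (domGraph G r).Adj p q ↔
      (∃ a b, p = inl a ∧ q = inl b ∧ G.Adj a b) ∨
      (p = inr 1 ∧ q = inr 2) ∨ (p = inr 2 ∧ q = inr 1) ∨
      (p = inr 2 ∧ q = inl r) ∨ (p = inl r ∧ q = inr 2) ∨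
      (∃ w, p = inr 0 ∧ q = inl w) ∨ (∃ w, p = inl w ∧ q = inr 0) := by
  simp only [domGraph, SimpleGraph.fromRel_adj]
  constructor
  · rintro ⟨hne, (⟨a,b,rfl,rfl,h⟩|⟨rfl,rfl⟩|⟨rfl,rfl⟩|⟨w,rfl,rfl⟩) |
      (⟨a,b,rfl,rfl,h⟩|⟨h1,rfl⟩|⟨rfl,h1⟩|⟨w,h1,rfl⟩)⟩
    · exact Or.inl ⟨a, b, rfl, rfl, h⟩
    · exact Or.inr (Or.inl ⟨rfl, rfl⟩)
    · exact Or.inr <| Or.inr <| Or.inr <| Or.inl ⟨rfl, rfl⟩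
    · exact Or.inr <| Or.inr <| Or.inr <| Or.inr <| Or.inr <| Or.inl ⟨w, rfl, rfl⟩
    · exact Or.inl ⟨b, a, rfl, rfl, h.symm⟩
    · exact Or.inr <| Or.inr <| Or.inl ⟨rfl, h1⟩
    · exact Or.inr <| Or.inr <| Or.inr <| Or.inr <| Or.inl ⟨h1, rfl⟩
    · exact Or.inr <| Or.inr <| Or.inr <| Or.inr <| Or.inr <| Or.inr ⟨w, rfl, h1⟩
  · rintro (⟨a,b,rfl,rfl,h⟩|⟨rfl,rfl⟩|⟨rfl,rfl⟩|⟨rfl,rfl⟩|⟨rfl,rfl⟩|⟨w,rfl,rfl⟩|⟨w,rfl,rfl⟩)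
    · exact ⟨by simpa using h.ne, Or.inl (Or.inl ⟨a, b, rfl, rfl, h⟩)⟩
    · exact ⟨by simp, Or.inl (Or.inr (Or.inl ⟨rfl, rfl⟩))⟩
    · exact ⟨by simp, Or.inr (Or.inr (Or.inl ⟨rfl, rfl⟩))⟩
    · exact ⟨by simp, Or.inl (Or.inr (Or.inr (Or.inl ⟨rfl, rfl⟩)))⟩
    · exact ⟨by simp, Or.inr (Or.inr (Or.inr (Or.inl ⟨rfl, rfl⟩)))⟩
    · exact ⟨by simp, Or.inl (Or.inr (Or.inr (Or.inr ⟨w, rfl, rfl⟩)))⟩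
    · exact ⟨by simp, Or.inr (Or.inr (Or.inr (Or.inr ⟨w, rfl, rfl⟩)))⟩

lemma inr1_adj {V : Type*} {G : SimpleGraph V} {r : V} {q : V ⊕ Fin 3}
    (h : (domGraph G r).Adj (inr 1) q) : q = inr 2 := by
  rcases (domGraph_adj_iff G r _ q).mp h with
    ⟨a,b,h1,_,_⟩|⟨_,h2⟩|⟨h1,_⟩|⟨h1,_⟩|⟨h1,_⟩|⟨w,h1,_⟩|⟨w,h1,_⟩ <;>
    first | exact h2 | simp_all

lemma inr2_adj {V : Type*} {G : SimpleGraph V} {r : V} {q : V ⊕ Fin 3}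
    (h : (domGraph G r).Adj (inr 2) q) : q = inr 1 ∨ q = inl r := by
  rcases (domGraph_adj_iff G r _ q).mp h with
    ⟨a,b,h1,_,_⟩|⟨h1,_⟩|⟨_,h2⟩|⟨_,h2⟩|⟨h1,_⟩|⟨w,h1,_⟩|⟨w,h1,_⟩ <;>
    first | exact Or.inl h2 | exact Or.inr h2 | simp_all

def pullback {V : Type*} (R' : Finset (V ⊕ Fin 3)) (R : Finset V) (r : V)
    (hrR : r ∈ R) (h : ∀ v, (inl v : V ⊕ Fin 3) ∈ R' → v ∈ R) :
    ↥(R' : Set (V ⊕ Fin 3)) → ↥(R : Set V)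
  | ⟨inl v, hv⟩ => ⟨v, h v hv⟩
  | ⟨inr _, _⟩ => ⟨r, hrR⟩

theorem stmt_8 {V D : Type*} [Fintype V] (G : SimpleGraph V) (c : V → D)
    (M : Multiset D) (hM : M ≠ 0) (r : V) (x y : D) (hxy : x ≠ y)
    (hxM : x ∉ M) (hyM : y ∉ M) (hxc : ∀ v, c v ≠ x) (hyc : ∀ v, c v ≠ y) :
    ((∃ R : Finset V, IsMotifSolution G c M R ∧ r ∈ R) ↔
      ∃ R' : Finset (V ⊕ Fin 3),
        IsMotifSolution (domGraph G r) (domColor c x y) (x ::ₘ y ::ₘ M) R') ∧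
    (∀ v : V ⊕ Fin 3, v ∈ ({Sum.inr 0, Sum.inr 2} : Set (V ⊕ Fin 3)) ∨
      ∃ d ∈ ({Sum.inr 0, Sum.inr 2} : Set (V ⊕ Fin 3)), (domGraph G r).Adj d v) ∧
    ({Sum.inr 0, Sum.inr 2} : Set (V ⊕ Fin 3)).ncard = 2 := by
  classical
  refine ⟨⟨?_, ?_⟩, ?_, ?_⟩
  · -- forward
    rintro ⟨R, ⟨hconn, hcol⟩, hrR⟩
    set R' : Finset (V ⊕ Fin 3) := insert (inr 1) (insert (inr 2) (R.image inl)) with hR'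
    have h1 : (inr 1 : V ⊕ Fin 3) ∈ R' := Finset.mem_insert_self _ _
    have h2 : (inr 2 : V ⊕ Fin 3) ∈ R' :=
      Finset.mem_insert_of_mem (Finset.mem_insert_self _ _)
    have hmeml : ∀ v ∈ R, (inl v : V ⊕ Fin 3) ∈ R' := fun v hv =>
      Finset.mem_insert_of_mem (Finset.mem_insert_of_mem (Finset.mem_image_of_mem _ hv))
    have hr' : (inl r : V ⊕ Fin 3) ∈ R' := hmeml r hrR
    refine ⟨R', ?_, ?_⟩
    · -- connectivity
      let φ : G.induce (R : Set V) →g (domGraph G r).induce (R' : Set (V ⊕ Fin 3)) :=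
        { toFun := fun v => ⟨inl v.1, Finset.mem_coe.mpr (hmeml v.1 (Finset.mem_coe.mp v.2))⟩
          map_rel' := by
            intro a b hab
            exact (domGraph_adj_iff G r _ _).mpr (Or.inl ⟨a.1, b.1, rfl, rfl, hab⟩) }
      have key : ∀ z : ↥(R' : Set (V ⊕ Fin 3)),
          ((domGraph G r).induce (R' : Set (V ⊕ Fin 3))).Reachable z ⟨inr 2, h2⟩ := by
        rintro ⟨zz, hz⟩
        rcases zz with v | i
        · have hv : v ∈ R := by
            have hz' := Finset.mem_coe.mp hz
            rw [hR'] at hz'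
            simp only [Finset.mem_insert, Finset.mem_image] at hz'
            rcases hz' with h | h | ⟨w, hw, hw2⟩
            · simp at h
            · simp at h
            · exact (inl_injective hw2) ▸ hw
          have hre : (G.induce (R : Set V)).Reachable ⟨v, hv⟩ ⟨r, hrR⟩ :=
            hconn.preconnected _ _
          refine (hre.map φ).trans (SimpleGraph.Adj.reachable ?_)
          exact (domGraph_adj_iff G r _ _).mpr
            (Or.inr <| Or.inr <| Or.inr <| Or.inr <| Or.inl ⟨rfl, rfl⟩)
        · fin_cases i
          · exfalso
            have hz' := Finset.mem_coe.mp hz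
            rw [hR'] at hz'
            simp at hz'
          · exact SimpleGraph.Adj.reachable
              ((domGraph_adj_iff G r _ _).mpr (Or.inr (Or.inl ⟨rfl, rfl⟩)))
          · exact SimpleGraph.Reachable.refl _
      haveI : Nonempty ↥(R' : Set (V ⊕ Fin 3)) := ⟨⟨inr 2, Finset.mem_coe.mpr h2⟩⟩
      exact SimpleGraph.Connected.mk (fun a b => (key a).trans (key b).symm)
    · -- multiset
      have hval : R'.val = inr 1 ::ₘ inr 2 ::ₘ R.val.map inl := by
        rw [hR', Finset.insert_val_of_notMem (by simp),
          Finset.insert_val_of_notMem (by simp),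
          Finset.image_val_of_injOn (Sum.inl_injective.injOn)]
      rw [hval]
      simp only [Multiset.map_cons, Multiset.map_map]
      have e1 : domColor c x y (inr 1) = y := by simp [domColor]
      have e2 : domColor c x y (inr 2) = x := by simp [domColor]
      have e3 : Multiset.map (domColor c x y ∘ inl) R.val = M := by
        rw [show (domColor c x y ∘ inl) = c from rfl, hcol]
      rw [e1, e2, e3, Multiset.cons_swap]
  · -- backward
    rintro ⟨R', ⟨hconn, hcol⟩⟩
    -- inr 1 ∈ R'
    have h1 : (inr 1 : V ⊕ Fin 3) ∈ R' := by
      have hy : y ∈ Multiset.map (domColor c x y) R'.val := by rw [hcol]; simp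
      obtain ⟨z, hz, hcz⟩ := Multiset.mem_map.mp hy
      rcases z with v | i
      · exact absurd hcz (hyc v)
      · have hi : i = 1 := by
          by_contra hne
          simp only [domColor, Sum.elim_inr, if_neg hne] at hcz
          exact hxy hcz
        subst hi; exact Finset.mem_def.mpr hz
    -- some inl w0 ∈ R'
    obtain ⟨d, hd⟩ := Multiset.exists_mem_of_ne_zero hM
    have hdmem : d ∈ Multiset.map (domColor c x y) R'.val := by
      rw [hcol]; exact Multiset.mem_cons_of_mem (Multiset.mem_cons_of_mem hd)
    obtain ⟨z0, hz0, hcz0⟩ := Multiset.mem_map.mp hdmem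
    obtain ⟨w0, rfl⟩ : ∃ w0, z0 = inl w0 := by
      rcases z0 with v | i
      · exact ⟨v, rfl⟩
      · exfalso
        rcases eq_or_ne i 1 with rfl | hne
        · simp only [domColor, Sum.elim_inr, if_true, reduceIte] at hcz0
          exact hyM (hcz0 ▸ hd)
        · simp only [domColor, Sum.elim_inr, if_neg hne] at hcz0
          exact hxM (hcz0 ▸ hd)
    have hw0 : (inl w0 : V ⊕ Fin 3) ∈ R' := Finset.mem_def.mpr hz0
    -- inr 2 ∈ R' and inl r ∈ R'
    have key : ∀ (z zw : ↥(R' : Set (V ⊕ Fin 3)))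
        (q : ((domGraph G r).induce (R' : Set (V ⊕ Fin 3))).Walk z zw),
        (∃ w' : V, (↑zw : V ⊕ Fin 3) = inl w') →
        (↑z = (inr 1 : V ⊕ Fin 3) ∨ ↑z = (inr 2 : V ⊕ Fin 3)) →
        ((inr 2 : V ⊕ Fin 3) ∈ R' ∧ (inl r : V ⊕ Fin 3) ∈ R') := by
      intro z zw q
      induction q with
      | nil =>
        rintro ⟨w', hw'⟩ (h | h) <;> rw [h] at hw' <;> simp at hw'
      | @cons u b _ h p ih =>
        rintro hex (hz | hz)
        · have hb : (↑b : V ⊕ Fin 3) = inr 2 := by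
            refine inr1_adj (G := G) (r := r) ?_
            rw [← hz]; exact h
          exact ih hex (Or.inr hb)
        · have hadj : (domGraph G r).Adj (inr 2) ↑b := by rw [← hz]; exact h
          rcases inr2_adj hadj with hb | hb
          · exact ih hex (Or.inl hb)
          · refine ⟨?_, ?_⟩
            · rw [← hz]; exact Finset.mem_coe.mp u.2
            · rw [← hb]; exact Finset.mem_coe.mp b.2
    obtain ⟨q⟩ := hconn.preconnected ⟨inr 1, Finset.mem_coe.mpr h1⟩
      ⟨inl w0, Finset.mem_coe.mpr hw0⟩
    obtain ⟨h2, hr'⟩ := key _ _ q ⟨w0, rfl⟩ (Or.inl rfl)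
    -- inr 0 ∉ R'
    have h0 : (inr 0 : V ⊕ Fin 3) ∉ R' := by
      intro h0
      have hsub : ({inr 0, inr 2} : Finset (V ⊕ Fin 3)) ⊆ R' := by
        intro z hz
        rcases Finset.mem_insert.mp hz with rfl | hz
        · exact h0
        · rw [Finset.mem_singleton.mp hz]; exact h2
      have hle := Multiset.count_le_of_le x
        (Multiset.map_le_map (f := domColor c x y) (Finset.val_le_iff.mpr hsub))
      rw [hcol] at hle
      have hv : ({inr 0, inr 2} : Finset (V ⊕ Fin 3)).val =
          (inr 0 ::ₘ {inr 2} : Multiset (V ⊕ Fin 3)) := by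
        rw [Finset.insert_val_of_notMem (by simp)]; rfl
      rw [hv] at hle
      have e0 : domColor c x y (inr 0) = x := by simp [domColor]
      have e2 : domColor c x y (inr 2) = x := by simp [domColor]
      simp only [Multiset.map_cons, Multiset.map_singleton, e0, e2,
        Multiset.count_cons, Multiset.count_singleton] at hle
      rw [Multiset.count_eq_zero.mpr hxM] at hle
      simp [hxy] at hle
    -- define R
    set R : Finset V := R'.preimage inl Sum.inl_injective.injOn with hRdef
    have hmemR : ∀ v : V, v ∈ R ↔ (inl v : V ⊕ Fin 3) ∈ R' := by
      intro v; rw [hRdef, Finset.mem_preimage]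
    have hrR : r ∈ R := (hmemR r).mpr hr'
    -- characterize R'
    have hchar : R' = insert (inr 1) (insert (inr 2) (R.image inl)) := by
      ext z
      rcases z with v | i
      · simp only [Finset.mem_insert, Finset.mem_image]
        constructor
        · intro hz
          exact Or.inr (Or.inr ⟨v, (hmemR v).mpr hz, rfl⟩)
        · rintro (h | h | ⟨w, hw, hw2⟩)
          · simp at h
          · simp at h
          · exact (inl_injective hw2) ▸ ((hmemR w).mp hw)
      · fin_cases i
        · simp [h0]
        · simp [h1]
        · simp [h2]
    -- multiset equality
    have hval : R'.val = inr 1 ::ₘ inr 2 ::ₘ R.val.map inl := by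
      rw [hchar, Finset.insert_val_of_notMem (by simp),
        Finset.insert_val_of_notMem (by simp),
        Finset.image_val_of_injOn (Sum.inl_injective.injOn)]
    have hMR : Multiset.map c R.val = M := by
      have hc2 := hcol
      rw [hval] at hc2
      simp only [Multiset.map_cons, Multiset.map_map] at hc2
      have e1 : domColor c x y (inr 1) = y := by simp [domColor]
      have e2 : domColor c x y (inr 2) = x := by simp [domColor]
      rw [e1, e2, show (domColor c x y ∘ inl) = c from rfl, Multiset.cons_swap] at hc2
      exact (Multiset.cons_inj_right y).mp ((Multiset.cons_inj_right x).mp hc2)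
    -- connectivity of G[R]
    have hml : ∀ v : V, (inl v : V ⊕ Fin 3) ∈ R' → v ∈ R := fun v hv => (hmemR v).mpr hv
    set f := pullback R' R r hrR hml with hf
    have step : ∀ (z z' : ↥(R' : Set (V ⊕ Fin 3))),
        ((domGraph G r).induce (R' : Set (V ⊕ Fin 3))).Adj z z' →
        f z = f z' ∨ (G.induce (R : Set V)).Adj (f z) (f z') := by
      rintro ⟨zz, hz⟩ ⟨zz', hz'⟩ hadj
      have h' : (domGraph G r).Adj zz zz' := hadj
      rcases (domGraph_adj_iff G r _ _).mp h' with
        ⟨a,b,rfl,rfl,hab⟩|⟨rfl,rfl⟩|⟨rfl,rfl⟩|⟨rfl,rfl⟩|⟨rfl,rfl⟩|⟨w,rfl,rfl⟩|⟨w,rfl,rfl⟩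
      · exact Or.inr hab
      · exact Or.inl rfl
      · exact Or.inl rfl
      · exact Or.inl rfl
      · exact Or.inl rfl
      · exact absurd (Finset.mem_coe.mp hz) h0
      · exact absurd (Finset.mem_coe.mp hz') h0
    have reach : ∀ (z z' : ↥(R' : Set (V ⊕ Fin 3)))
        (q : ((domGraph G r).induce (R' : Set (V ⊕ Fin 3))).Walk z z'),
        (G.induce (R : Set V)).Reachable (f z) (f z') := by
      intro z z' q
      induction q with
      | nil => exact SimpleGraph.Reachable.refl _
      | cons h p ih =>
        rcases step _ _ h with he | ha
        · rw [he]; exact ih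
        · exact ha.reachable.trans ih
    refine ⟨R, ⟨?_, hMR⟩, hrR⟩
    haveI : Nonempty ↥(R : Set V) := ⟨⟨r, Finset.mem_coe.mpr hrR⟩⟩
    refine SimpleGraph.Connected.mk (fun a b => ?_)
    obtain ⟨q⟩ := hconn.preconnected
      ⟨inl ↑a, Finset.mem_coe.mpr ((hmemR a.1).mp (Finset.mem_coe.mp a.2))⟩
      ⟨inl ↑b, Finset.mem_coe.mpr ((hmemR b.1).mp (Finset.mem_coe.mp b.2))⟩
    exact reach _ _ q
  · -- domination
    intro v
    rcases v with w | i
    · exact Or.inr ⟨inr 0, Or.inl rfl,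
        (domGraph_adj_iff G r _ _).mpr (Or.inr <| Or.inr <| Or.inr <| Or.inr <|
          Or.inr <| Or.inl ⟨w, rfl, rfl⟩)⟩
    · fin_cases i
      · exact Or.inl (Or.inl rfl)
      · exact Or.inr ⟨inr 2, Or.inr rfl,
          (domGraph_adj_iff G r _ _).mpr (Or.inr <| Or.inr <| Or.inl ⟨rfl, rfl⟩)⟩
      · exact Or.inl (Or.inr rfl)
  · -- ncard
    rw [Set.ncard_pair (by simp)]
end

section
/- Let q ≥ 1, t ≥ 1, and let 𝒮_1, …, 𝒮_t be collections of 3-element subsets of {1,…,3q}. Let G be the graph with vertex set {r_1,…,r_t} ∪ {s_Y : Y a 3-element subset of {1,…,3q}} ∪ {x_1,…,x_{3q}}, with an edge between r_i and s_Y if and only if Y ∈ 𝒮_i, an edge between s_Y and x_w if and only if w ∈ Y, and no other edges. Color c(r_i) = 1 for all i, c(s_Y) = 2 for all Y, and c(x_w) = 3 for all w, and let M be the multiset containing color 1 with multiplicity 1, color 2 with multiplicity q, and color 3 with multiplicity 3q. Then (G, c, M) has a motif solution if and only if there exists i ∈ {1,…,t} such that 𝒮_i contains a subcollection 𝒯 with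 the property that every element of {1,…,3q} belongs to exactly one set of 𝒯. -/
/-- Vertex set of Statement 11: the `r_i` (`Sum.inl i`), the `s_Y` for `Y` a 3-element
subset of `{1,…,3q}` (`Sum.inr (Sum.inl Y)`), and the `x_w` (`Sum.inr (Sum.inr w)`). -/
abbrev ccV (q t : ℕ) :=
  Fin t ⊕ ({Y : Finset (Fin (3 * q)) // Y.card = 3} ⊕ Fin (3 * q))

/-- Edges of Statement 11: `r_i — s_Y` iff `Y ∈ 𝒮_i`, and `s_Y — x_w` iff `w ∈ Y`. -/
def ccRel (q t : ℕ) (S : Fin t → Finset (Finset (Fin (3 * q)))) (a b : ccV q t) : Prop :=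
  (∃ (i : Fin t) (Y : {Y : Finset (Fin (3 * q)) // Y.card = 3}),
    a = Sum.inl i ∧ b = Sum.inr (Sum.inl Y) ∧ Y.val ∈ S i) ∨
  (∃ (Y : {Y : Finset (Fin (3 * q)) // Y.card = 3}) (w : Fin (3 * q)),
    a = Sum.inr (Sum.inl Y) ∧ b = Sum.inr (Sum.inr w) ∧ w ∈ Y.val)


/-
If `R` is a motif solution, the color counts force `R = {r_i} ∪ {s_Y : Y ∈ T} ∪ {x_1, …, x_{3q}}`
with `|T| = q`. Connectivity makes every `x_w` adjacent to some `s_Y`, so the `q` triples of `T`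
cover the `3q` points, and by counting they cover each point exactly once. An `s_Y` with
`Y ∉ 𝒮_i` would then lie, together with its three `x_w`, in a component of `G[R]` missing
`r_i`; hence `T ⊆ 𝒮_i`. Conversely, an exact cover `T ⊆ 𝒮_i` has `q` triples and the same
vertex set is connected through `r_i`.
-/

open Finset

section ExactCover

variable {α : Type*}

def IsExactCover (B : Finset (Finset α)) : Prop :=
  ∀ a, ∃! b, b ∈ B ∧ a ∈ b

variable [DecidableEq α] {B : Finset (Finset α)}

theorem isExactCover_iff_card_filter :
    IsExactCover B ↔ ∀ a, #{b ∈ B | a ∈ b} = 1 := by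
  simp only [IsExactCover, card_eq_one_iff_existsUnique, mem_filter]

variable [Fintype α]

theorem IsExactCover.sum_card (h : IsExactCover B) : ∑ b ∈ B, #b = Fintype.card α := by
  simpa using Finset.sum_card (isExactCover_iff_card_filter.mp h)

theorem sum_card_filter_mem_eq_sum_card :
    ∑ a, #{b ∈ B | a ∈ b} = ∑ b ∈ B, #b := by
  simp_rw [card_eq_sum_ones, sum_filter]
  rw [sum_comm]
  simp

theorem isExactCover_of_covers_of_sum_card_le (hcov : ∀ a, ∃ b ∈ B, a ∈ b)
    (hsum : ∑ b ∈ B, #b ≤ Fintype.card α) : IsExactCover B := by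
  have hpos : ∀ a, 1 ≤ #{b ∈ B | a ∈ b} := fun a =>
    let ⟨b, hb, hab⟩ := hcov a
    card_pos.mpr ⟨b, mem_filter.mpr ⟨hb, hab⟩⟩
  have heq := (sum_eq_sum_iff_of_le fun a (_ : a ∈ univ) => hpos a).mp <| by
    refine le_antisymm (sum_le_sum fun a _ => hpos a) ?_
    simpa [sum_card_filter_mem_eq_sum_card] using hsum
  exact isExactCover_iff_card_filter.mpr fun a => (heq a (mem_univ a)).symm

end ExactCover

theorem Multiset.replicate_add_replicate_add_replicate_inj {α : Type*} [DecidableEq α]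
    {x y z : α} (hxy : x ≠ y) (hxz : x ≠ z) (hyz : y ≠ z) {a b c a' b' c' : ℕ} :
    replicate a x + replicate b y + replicate c z =
        replicate a' x + replicate b' y + replicate c' z ↔
      a = a' ∧ b = b' ∧ c = c' := by
  refine ⟨fun h => ?_, by rintro ⟨rfl, rfl, rfl⟩; rfl⟩
  have hx := congrArg (count x) h
  have hy := congrArg (count y) h
  have hz := congrArg (count z) h
  simp [count_replicate, hxy, hxz, hyz, hxy.symm, hxz.symm, hyz.symm] at hx hy hz
  exact ⟨hx, hy, hz⟩

theorem SimpleGraph.Reachable.mem_of_adj_closed {V : Type*} {G : SimpleGraph V} {C : Set V}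
    (hC : ∀ v ∈ C, ∀ w, G.Adj v w → w ∈ C) {u v : V} (h : G.Reachable u v) (hu : u ∈ C) :
    v ∈ C :=
  h.mem_subgraphVerts (H := (⊤ : G.Subgraph).induce C)
    (fun v hv w hvw => ⟨hv, hC v hv w hvw, hvw⟩) hu

section Construction

abbrev ccTriple (q : ℕ) := {Y : Finset (Fin (3 * q)) // Y.card = 3}

abbrev ccGraph (q t : ℕ) (S : Fin t → Finset (Finset (Fin (3 * q)))) : SimpleGraph (ccV q t) :=
  SimpleGraph.fromRel (ccRel q t S)

variable {q t : ℕ}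

abbrev ccColor : ccV q t → ℕ :=
  Sum.elim (fun _ => 1) (Sum.elim (fun _ => 2) (fun _ => 3))

/-- The vertex set `{r_i} ∪ {s_Y : Y ∈ T} ∪ {x_1, …, x_{3q}}`. -/
def ccSupport (i : Fin t) (T : Finset (ccTriple q)) : Finset (ccV q t) :=
  ({i} : Finset (Fin t)).disjSum (T.disjSum univ)

theorem map_ccColor_disjSum (I : Finset (Fin t)) (T : Finset (ccTriple q))
    (W : Finset (Fin (3 * q))) :
    Multiset.map ccColor (I.disjSum (T.disjSum W)).val =
      Multiset.replicate #I 1 + Multiset.replicate #T 2 + Multiset.replicate #W 3 := by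
  simp [val_disjSum, Multiset.map_disjSum, Multiset.map_const', add_assoc]

theorem map_ccColor_eq_iff {R : Finset (ccV q t)} :
    Multiset.map ccColor R.val =
        Multiset.replicate 1 1 + Multiset.replicate q 2 + Multiset.replicate (3 * q) 3 ↔
      ∃ i T, #T = q ∧ R = ccSupport i T := by
  constructor
  · intro h
    rw [← toLeft_disjSum_toRight (u := R), ← toLeft_disjSum_toRight (u := R.toRight),
      map_ccColor_disjSum, Multiset.replicate_add_replicate_add_replicate_inj (by decide)
        (by decide) (by decide)] at h
    obtain ⟨hI, hT, hW⟩ := h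
    obtain ⟨i, hi⟩ := card_eq_one.mp hI
    refine ⟨i, R.toRight.toLeft, hT, ?_⟩
    rw [ccSupport, ← hi, ← eq_univ_of_card _ (by simpa using hW), toLeft_disjSum_toRight,
      toLeft_disjSum_toRight]
  · rintro ⟨i, T, hT, rfl⟩
    rw [ccSupport, map_ccColor_disjSum, card_singleton, card_univ, Fintype.card_fin, hT]

variable {S : Fin t → Finset (Finset (Fin (3 * q)))} {i : Fin t} {T : Finset (ccTriple q)}

theorem ccGraph_adj_inl_inr_inl {Y : ccTriple q} :
    (ccGraph q t S).Adj (.inl i) (.inr (.inl Y)) ↔ Y.val ∈ S i := by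
  simp [ccRel]

theorem ccGraph_adj_inr_inl_inr_inr {Y : ccTriple q} {w : Fin (3 * q)} :
    (ccGraph q t S).Adj (.inr (.inl Y)) (.inr (.inr w)) ↔ w ∈ Y.val := by
  simp [ccRel]

theorem ccGraph_adj_inr_inr_iff {w : Fin (3 * q)} {v : ccV q t} :
    (ccGraph q t S).Adj (.inr (.inr w)) v ↔ ∃ Y : ccTriple q, v = .inr (.inl Y) ∧ w ∈ Y.val := by
  rcases v with j | Y | w' <;> simp [ccRel]

theorem ccGraph_adj_inr_inl_iff {Y : ccTriple q} {v : ccV q t} :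
    (ccGraph q t S).Adj (.inr (.inl Y)) v ↔
      (∃ j, v = .inl j ∧ Y.val ∈ S j) ∨ ∃ w, v = .inr (.inr w) ∧ w ∈ Y.val := by
  rcases v with j | Y' | w <;> simp [ccRel]

@[simp] theorem inl_mem_ccSupport {j : Fin t} : .inl j ∈ ccSupport i T ↔ j = i := by
  simp [ccSupport]

@[simp] theorem inr_inl_mem_ccSupport {Y : ccTriple q} :
    .inr (.inl Y) ∈ ccSupport (t := t) i T ↔ Y ∈ T := by
  simp [ccSupport]

@[simp] theorem inr_inr_mem_ccSupport {w : Fin (3 * q)} :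
    .inr (.inr w) ∈ ccSupport (t := t) i T := by
  simp [ccSupport]

theorem exists_mem_of_connected_induce_ccSupport
    (h : ((ccGraph q t S).induce (ccSupport i T : Set (ccV q t))).Connected) (w : Fin (3 * q)) :
    ∃ Y ∈ T, w ∈ Y.val := by
  obtain ⟨p⟩ := h.preconnected ⟨.inr (.inr w), by simp⟩ ⟨.inl i, by simp⟩
  have hadj := SimpleGraph.induce_adj.mp (p.adj_snd (p.not_nil_of_ne (by simp)))
  obtain ⟨Y, hY, hwY⟩ := ccGraph_adj_inr_inr_iff.mp hadj
  have hmem := p.snd.property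
  rw [hY] at hmem
  exact ⟨Y, by simpa using hmem, hwY⟩

theorem val_mem_of_connected_induce_ccSupport
    (h : ((ccGraph q t S).induce (ccSupport i T : Set (ccV q t))).Connected)
    (hT : IsExactCover (T.map (Function.Embedding.subtype _))) {Y : ccTriple q} (hY : Y ∈ T) :
    Y.val ∈ S i := by
  by_contra hYS
  -- `C` is closed under adjacency in the induced graph: `s_Y` is not adjacent to `r_i`, and
  -- by exactness each `x_w` with `w ∈ Y` is adjacent to no selected `s_Z` other than `s_Y`.
  let C : Set (ccV q t) := insert (.inr (.inl Y)) ((fun w => .inr (.inr w)) '' {w | w ∈ Y.val})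
  have hclosed : ∀ v ∈ Subtype.val ⁻¹' C, ∀ v',
      ((ccGraph q t S).induce (ccSupport i T : Set (ccV q t))).Adj v v' →
        v' ∈ Subtype.val ⁻¹' C := by
    rintro ⟨v, _⟩ hv ⟨v', hv'⟩ hadj
    simp only [Set.mem_preimage, SimpleGraph.induce_adj] at hv hadj ⊢
    rcases hv with rfl | ⟨w, hwY, rfl⟩
    · rcases ccGraph_adj_inr_inl_iff.mp hadj with ⟨j, rfl, hYj⟩ | ⟨w, rfl, hwY⟩
      · obtain rfl : j = i := by simpa using hv'
        exact absurd hYj hYS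
      · exact Or.inr ⟨w, hwY, rfl⟩
    · obtain ⟨Z, rfl, hwZ⟩ := ccGraph_adj_inr_inr_iff.mp hadj
      have hZ : Z ∈ T := by simpa using hv'
      have : Z.val = Y.val := (hT w).unique ⟨mem_map_of_mem _ hZ, hwZ⟩ ⟨mem_map_of_mem _ hY, hwY⟩
      exact Or.inl (congrArg _ (congrArg _ (Subtype.ext this)))
  have hi := (h.preconnected ⟨.inr (.inl Y), by simpa using hY⟩ ⟨.inl i, by simp⟩)
    |>.mem_of_adj_closed hclosed (by simp [C])
  simp [C] at hi

theorem connected_induce_ccSupport (hTS : ∀ Y ∈ T, Y.val ∈ S i)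
    (hcov : ∀ w, ∃ Y ∈ T, w ∈ Y.val) :
    ((ccGraph q t S).induce (ccSupport i T : Set (ccV q t))).Connected := by
  have hroot : ∀ Y (hY : Y ∈ T),
      ((ccGraph q t S).induce (ccSupport i T : Set (ccV q t))).Reachable
        ⟨.inl i, by simp⟩ ⟨.inr (.inl Y), by simpa using hY⟩ :=
    fun Y hY => SimpleGraph.Adj.reachable (ccGraph_adj_inl_inr_inl.mpr (hTS Y hY))
  rw [SimpleGraph.connected_iff_exists_forall_reachable]
  refine ⟨⟨.inl i, by simp⟩, ?_⟩
  rintro ⟨j | Y | w, hv⟩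
  · obtain rfl : j = i := by simpa using hv
    rfl
  · exact hroot Y (by simpa using hv)
  · obtain ⟨Y, hY, hwY⟩ := hcov w
    exact (hroot Y hY).trans (SimpleGraph.Adj.reachable (ccGraph_adj_inr_inl_inr_inr.mpr hwY))

theorem sum_card_map_ccTriple (T : Finset (ccTriple q)) :
    ∑ Y ∈ T.map (Function.Embedding.subtype _), #Y = #T * 3 := by
  rw [sum_map, sum_congr rfl fun Y _ => Y.property, sum_const, smul_eq_mul]

theorem connected_induce_ccSupport_iff (hT : #T = q) :
    ((ccGraph q t S).induce (ccSupport i T : Set (ccV q t))).Connected ↔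
      (∀ Y ∈ T, Y.val ∈ S i) ∧ IsExactCover (T.map (Function.Embedding.subtype _)) := by
  constructor
  · intro h
    have hcover : IsExactCover (T.map (Function.Embedding.subtype _)) := by
      refine isExactCover_of_covers_of_sum_card_le (fun w => ?_) ?_
      · obtain ⟨Y, hY, hwY⟩ := exists_mem_of_connected_induce_ccSupport h w
        exact ⟨Y.val, mem_map_of_mem _ hY, hwY⟩
      · rw [sum_card_map_ccTriple, hT, Fintype.card_fin, mul_comm]
    exact ⟨fun Y hY => val_mem_of_connected_induce_ccSupport h hcover hY, hcover⟩
  · rintro ⟨hTS, hcover⟩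
    refine connected_induce_ccSupport hTS fun w => ?_
    obtain ⟨_, ⟨hYT, hwY⟩, -⟩ := hcover w
    obtain ⟨Y, hY, rfl⟩ := mem_map.mp hYT
    exact ⟨Y, hY, hwY⟩

end Construction

theorem stmt_11_general (q t : ℕ)
    (S : Fin t → Finset (Finset (Fin (3 * q))))
    (hS : ∀ i, ∀ Y ∈ S i, Y.card = 3) :
    (∃ R : Finset (ccV q t),
      IsMotifSolution (SimpleGraph.fromRel (ccRel q t S))
        (Sum.elim (fun _ => (1 : ℕ)) (Sum.elim (fun _ => (2 : ℕ)) (fun _ => (3 : ℕ))))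
        (Multiset.replicate 1 1 + Multiset.replicate q 2 + Multiset.replicate (3 * q) 3)
        R) ↔
    ∃ i : Fin t, ∃ T : Finset (Finset (Fin (3 * q))), T ⊆ S i ∧
      ∀ w : Fin (3 * q), ∃! Y, Y ∈ T ∧ w ∈ Y := by
  constructor
  · rintro ⟨R, hconn, hcolor⟩
    obtain ⟨i, T, hT, rfl⟩ := map_ccColor_eq_iff.mp hcolor
    obtain ⟨hTS, hcover⟩ := (connected_induce_ccSupport_iff hT).mp hconn
    refine ⟨i, _, fun Y hYT => ?_, hcover⟩
    obtain ⟨Y, hY, rfl⟩ := mem_map.mp hYT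
    exact hTS Y hY
  · rintro ⟨i, T, hTS, hcover⟩
    let T' : Finset (ccTriple q) := T.subtype (·.card = 3)
    have hT' : T'.map (Function.Embedding.subtype _) = T :=
      subtype_map_of_mem fun Y hY => hS i Y (hTS hY)
    have hcard : #T' = q := by
      have hsum := (hT' ▸ hcover : IsExactCover T).sum_card
      rw [← hT', sum_card_map_ccTriple, Fintype.card_fin, mul_comm] at hsum
      omega
    refine ⟨ccSupport i T', (connected_induce_ccSupport_iff hcard).mpr ⟨fun Y hY => ?_, ?_⟩,
      map_ccColor_eq_iff.mpr ⟨i, T', hcard, rfl⟩⟩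
    · exact hTS (mem_subtype.mp hY)
    · rwa [hT']

/-- With `c(r_i) = 1`, `c(s_Y) = 2`, `c(x_w) = 3` and
`M = {1¹, 2^q, 3^{3q}}`, the instance `(G, c, M)` has a motif solution iff some `𝒮_i`
contains a subcollection that exactly covers `{1, …, 3q}`. -/
theorem stmt_11 (q t : ℕ) (hq : 1 ≤ q) (ht : 1 ≤ t)
    (S : Fin t → Finset (Finset (Fin (3 * q))))
    (hS : ∀ i, ∀ Y ∈ S i, Y.card = 3) :
    (∃ R : Finset (ccV q t),
      IsMotifSolution (SimpleGraph.fromRel (ccRel q t S))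
        (Sum.elim (fun _ => (1 : ℕ)) (Sum.elim (fun _ => (2 : ℕ)) (fun _ => (3 : ℕ))))
        (Multiset.replicate 1 1 + Multiset.replicate q 2 + Multiset.replicate (3 * q) 3)
        R) ↔
    ∃ i : Fin t, ∃ T : Finset (Finset (Fin (3 * q))), T ⊆ S i ∧
      ∀ w : Fin (3 * q), ∃! Y, Y ∈ T ∧ w ∈ Y :=
  stmt_11_general q t S hS
end

section
/- Let (G, c, M) be an instance of Graph Motif in which M has at least two elements (counted with multiplicity), and let C_1, …, C_k ⊆ V(G) be an edge clique cover of G: each G[C_i] is a clique and every edge of G has both endpoints inside some C_i. For a nonempty T ⊆ {1,…,k}, let W_T = ⋃_{i ∈ T} C_i, let B_T be the bipartite graph on vertex set T ⊎ W_T with an edge between i ∈ T and w ∈ W_T if and only if w ∈ C_i, let c'_T agree with c on W_T and assign to every vertex of T a fresh color γ that does not occur in M and is not a value of c, and let M'_T = M together with |T| copies of γ. Then (G, c, M) has a motif solution if and only if there exists a nonempty T ⊆ {1,…,k} such that (B_T, c'_T, M'_T) has a motif solution. -/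
/-!
Both directions rest on one principle: if connected vertex sets are indexed by the vertices
of a connected graph, and sets with adjacent indices overlap, then their union is connected.

From a solution `R` of `(G, c, M)`, take `T` to be the cliques meeting `R`. Since `|R| ≥ 2`,
every vertex of `R` has a neighbour in `R`, hence lies in `W_T`. The closed neighbourhoods of
the vertices of `R` in `B_T` are connected, indexed by the connected graph `G[R]`, and overlap
along edges because every edge `uv` lies in some clique `C_i` (path `u - i - v`); their union
is `T ⊎ R`, whose colours are `M + |T|·γ`.

Conversely, from a solution `R'` of `(B_T, c'_T, M'_T)`, freshness of `γ` forces the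
`W_T`-part `R` of `R'` to carry exactly the colours `M`. Assign to `w ∈ R` the set `{w}` and to
`i ∈ T` the clique `C_i ∩ R`; these are connected in `G`, indexed by `B_T[R']`, and overlap along
its edges, so `G[R]` is connected.
-/

open Finset

theorem Multiset.eq_of_add_replicate_eq_add_replicate {α : Type*} {a : α} {s t : Multiset α}
    {m n : ℕ} (hs : a ∉ s) (ht : a ∉ t) (h : s + replicate m a = t + replicate n a) : s = t := by
  classical
  have hrep : ∀ k, (replicate k a).filter (· ≠ a) = 0 := fun k =>
    filter_eq_nil.2 fun b hb => not_not.2 (eq_of_mem_replicate hb)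
  simpa [filter_add, hrep, filter_eq_self.2 fun b hb => ne_of_mem_of_not_mem hb hs,
    filter_eq_self.2 fun b hb => ne_of_mem_of_not_mem hb ht] using congrArg (filter (· ≠ a)) h

theorem Finset.map_val_sumElim {α β γ : Type*} (u : Finset (α ⊕ β)) (f : α → γ) (g : β → γ) :
    u.val.map (Sum.elim f g) = u.toLeft.val.map f + u.toRight.val.map g := by
  conv_lhs => rw [← u.toLeft_disjSum_toRight]
  rw [val_disjSum, Multiset.map_disjSum]
  rfl

namespace SimpleGraph

variable {V ι : Type*} {G : SimpleGraph V}

theorem induce_iUnion_preconnected {H : SimpleGraph ι} (hH : H.Preconnected) {s : ι → Set V}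
    (hs : ∀ i, (G.induce (s i)).Preconnected)
    (hadj : ∀ ⦃i j⦄, H.Adj i j → (s i ∩ s j).Nonempty) :
    (G.induce (⋃ i, s i)).Preconnected := by
  have patch : ∀ i {x y} (hx : x ∈ s i) (hy : y ∈ s i), (G.induce (⋃ i, s i)).Reachable
      ⟨x, Set.mem_iUnion_of_mem i hx⟩ ⟨y, Set.mem_iUnion_of_mem i hy⟩ :=
    fun i x y hx hy => (hs i ⟨x, hx⟩ ⟨y, hy⟩).map (induceHomOfLE G (Set.subset_iUnion s i)).toHom
  rintro ⟨x, hx⟩ ⟨y, hy⟩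
  obtain ⟨i, hxi⟩ := Set.mem_iUnion.1 hx
  obtain ⟨j, hyj⟩ := Set.mem_iUnion.1 hy
  obtain ⟨p⟩ := hH i j
  induction p generalizing x with
  | nil => exact patch _ hxi hyj
  | cons hij _ ih =>
    obtain ⟨z, hzi, hzj⟩ := hadj hij
    exact (patch _ hxi hzi).trans (ih _ _ hzj hyj)

theorem induce_insert_neighborSet_preconnected (v : V) :
    (G.induce (insert v (G.neighborSet v))).Preconnected := by
  have from_center : ∀ u (hu : u ∈ insert v (G.neighborSet v)),
      (G.induce (insert v (G.neighborSet v))).Reachable ⟨v, Set.mem_insert v _⟩ ⟨u, hu⟩ := by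
    rintro u (rfl | hu)
    · rfl
    · exact Adj.reachable hu
  rintro ⟨a, ha⟩ ⟨b, hb⟩
  exact (from_center a ha).symm.trans (from_center b hb)

theorem IsClique.induce_preconnected {s : Set V} (h : G.IsClique s) :
    (G.induce s).Preconnected :=
  induce_eq_top.2 h ▸ preconnected_top

end SimpleGraph

open SimpleGraph

section CliqueIncidence

variable {ι V D : Type*} {G : SimpleGraph V} {C : ι → Set V} {T : Finset ι}

-- The bipartite graph `B_T` on `T ⊎ W_T`, where `W_T = ⋃ i ∈ T, C i`.
def cliqueIncidenceGraph (C : ι → Set V) (T : Finset ι) :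
    SimpleGraph ({i // i ∈ T} ⊕ {w // w ∈ ⋃ i ∈ T, C i}) :=
  SimpleGraph.fromRel fun a b =>
    ∃ (i : {i // i ∈ T}) (w : {w // w ∈ ⋃ i ∈ T, C i}),
      a = Sum.inl i ∧ b = Sum.inr w ∧ (w : V) ∈ C i.val

@[simp]
theorem cliqueIncidenceGraph_adj_inl_inr {i : {i // i ∈ T}} {w : {w // w ∈ ⋃ i ∈ T, C i}} :
    (cliqueIncidenceGraph C T).Adj (.inl i) (.inr w) ↔ (w : V) ∈ C i := by
  refine ⟨?_, fun h => ⟨Sum.inl_ne_inr, Or.inl ⟨i, w, rfl, rfl, h⟩⟩⟩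
  rintro ⟨-, ⟨i', w', hi, hw, h⟩ | ⟨i', w', h, -⟩⟩
  · cases hi
    cases hw
    exact h
  · cases h

@[simp]
theorem cliqueIncidenceGraph_adj_inr_inl {i : {i // i ∈ T}} {w : {w // w ∈ ⋃ i ∈ T, C i}} :
    (cliqueIncidenceGraph C T).Adj (.inr w) (.inl i) ↔ (w : V) ∈ C i := by
  rw [adj_comm, cliqueIncidenceGraph_adj_inl_inr]

@[simp]
theorem cliqueIncidenceGraph_not_adj_inl_inl {i j : {i // i ∈ T}} :
    ¬ (cliqueIncidenceGraph C T).Adj (.inl i) (.inl j) := by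
  simp [cliqueIncidenceGraph]

@[simp]
theorem cliqueIncidenceGraph_not_adj_inr_inr {w x : {w // w ∈ ⋃ i ∈ T, C i}} :
    ¬ (cliqueIncidenceGraph C T).Adj (.inr w) (.inr x) := by
  simp [cliqueIncidenceGraph]

theorem cliqueIncidenceGraph_induce_disjSum_preconnected [DecidablePred (· ∈ ⋃ i ∈ T, C i)]
    {R : Finset V} (hR : (G.induce (R : Set V)).Preconnected)
    (hT : ∀ i ∈ T, ∃ u ∈ R, u ∈ C i)
    (hcover : ∀ u ∈ R, ∀ v ∈ R, G.Adj u v → ∃ i ∈ T, u ∈ C i ∧ v ∈ C i)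
    (hRW : ∀ u ∈ R, u ∈ ⋃ i ∈ T, C i) :
    ((cliqueIncidenceGraph C T).induce
      ↑((univ : Finset {i // i ∈ T}).disjSum (R.subtype (· ∈ ⋃ i ∈ T, C i)))).Preconnected := by
  let star : ↥(R : Set V) → Set _ := fun u =>
    insert (.inr ⟨u, hRW u u.2⟩) ((cliqueIncidenceGraph C T).neighborSet (.inr ⟨u, hRW u u.2⟩))
  have hunion :
      ⋃ u, star u = ↑((univ : Finset {i // i ∈ T}).disjSum (R.subtype (· ∈ ⋃ i ∈ T, C i))) := by
    ext (⟨i, hi⟩ | ⟨w, hw⟩)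
    · simpa [star] using hT i hi
    · simp [star]
  rw [← hunion]
  refine induce_iUnion_preconnected hR (fun u => induce_insert_neighborSet_preconnected _) ?_
  rintro ⟨u, hu⟩ ⟨v, hv⟩ huv
  obtain ⟨i, hiT, hui, hvi⟩ := hcover u hu v hv huv
  exact ⟨.inl ⟨i, hiT⟩, by simpa [star] using hui, by simpa [star] using hvi⟩

theorem induce_map_toRight_preconnected_of_cliqueIncidenceGraph (hC : ∀ i ∈ T, G.IsClique (C i))
    {R' : Finset ({i // i ∈ T} ⊕ {w // w ∈ ⋃ i ∈ T, C i})}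
    (hR' : ((cliqueIncidenceGraph C T).induce (R' : Set _)).Preconnected) :
    (G.induce (R'.toRight.map (.subtype _) : Set V)).Preconnected := by
  set R := R'.toRight.map (.subtype _)
  let patch : ↥(R' : Set _) → Set V := fun x =>
    Sum.elim (fun i : {i // i ∈ T} => C i ∩ R) (fun w : {w // w ∈ ⋃ i ∈ T, C i} => {w.1}) x.1
  have hunion : ⋃ x, patch x = R := by
    ext u
    simp [patch, R]
  rw [← hunion]
  refine induce_iUnion_preconnected hR' ?_ ?_
  · rintro ⟨i | w, -⟩
    · exact ((hC i i.2).subset Set.inter_subset_left).induce_preconnected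
    · exact (isClique_singleton _).induce_preconnected
  · rintro ⟨i | w, hx⟩ ⟨j | x, hy⟩ hxy <;> simp at hxy
    · exact ⟨x, by simpa [patch, R, hxy] using ⟨⟨i, i.2, hxy⟩, hy⟩⟩
    · exact ⟨w, by simpa [patch, R, hxy] using ⟨⟨j, j.2, hxy⟩, hx⟩⟩

theorem IsMotifSolution.exists_cliqueIncidenceGraph [Fintype ι] {c : V → D} {M : Multiset D}
    {R : Finset V} (hR : IsMotifSolution G c M R) (hM : 2 ≤ Multiset.card M)
    (hcover : ∀ u v, G.Adj u v → ∃ i, u ∈ C i ∧ v ∈ C i) (γ : D) :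
    ∃ T : Finset ι, T.Nonempty ∧ ∃ R', IsMotifSolution (cliqueIncidenceGraph C T)
      (Sum.elim (fun _ => γ) (fun w => c w)) (M + Multiset.replicate T.card γ) R' := by
  classical
  obtain ⟨hconn, hcol⟩ := hR
  have hR2 : R.Nontrivial := by
    rw [← one_lt_card_iff_nontrivial, card_def, ← Multiset.card_map c, hcol]
    omega
  have hnbr : ∀ u ∈ R, ∃ v ∈ R, G.Adj u v := by
    intro u hu
    have : Nontrivial (R : Set V) := hR2.coe_sort
    obtain ⟨⟨v, hv⟩, huv⟩ := hconn.preconnected.exists_adj_of_nontrivial ⟨u, hu⟩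
    exact ⟨v, hv, huv⟩
  set T := univ.filter fun i => ∃ u ∈ R, u ∈ C i
  have hcoverT : ∀ u ∈ R, ∀ v ∈ R, G.Adj u v → ∃ i ∈ T, u ∈ C i ∧ v ∈ C i := by
    intro u hu v _ huv
    obtain ⟨i, hui, hvi⟩ := hcover u v huv
    exact ⟨i, mem_filter.2 ⟨mem_univ _, u, hu, hui⟩, hui, hvi⟩
  have hRW : ∀ u ∈ R, u ∈ ⋃ i ∈ T, C i := by
    intro u hu
    obtain ⟨v, hv, huv⟩ := hnbr u hu
    obtain ⟨i, hi, hui, -⟩ := hcoverT u hu v hv huv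
    exact Set.mem_biUnion hi hui
  obtain ⟨u, hu⟩ := hR2.nonempty
  obtain ⟨i, hi, -⟩ := Set.mem_iUnion₂.1 (hRW u hu)
  refine ⟨T, ⟨i, hi⟩, univ.disjSum (R.subtype (· ∈ ⋃ i ∈ T, C i)), ?_, ?_⟩
  · refine (connected_iff _).2 ⟨?_, ⟨⟨.inr ⟨u, hRW u hu⟩, by simp [hu]⟩⟩⟩
    exact cliqueIncidenceGraph_induce_disjSum_preconnected hconn.preconnected
      (fun i hi => (mem_filter.1 hi).2) hcoverT hRW
  · have hcolW :
        (R.subtype (· ∈ ⋃ i ∈ T, C i)).val.map (fun w : {w // w ∈ ⋃ i ∈ T, C i} => c w) = M := by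
      conv_rhs => rw [← hcol, ← subtype_map_of_mem hRW]
      rw [map_val, Multiset.map_map]
      rfl
    rw [map_val_sumElim, toLeft_disjSum, toRight_disjSum, hcolW, Multiset.map_const', ← card_def,
      card_univ, Fintype.card_coe, add_comm]

theorem IsMotifSolution.of_cliqueIncidenceGraph {c : V → D} {M : Multiset D} {γ : D}
    {R' : Finset ({i // i ∈ T} ⊕ {w // w ∈ ⋃ i ∈ T, C i})}
    (hR' : IsMotifSolution (cliqueIncidenceGraph C T) (Sum.elim (fun _ => γ) (fun w => c w))
      (M + Multiset.replicate T.card γ) R')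
    (hM : M ≠ 0) (hC : ∀ i ∈ T, G.IsClique (C i)) (hγM : γ ∉ M) (hγc : ∀ v, c v ≠ γ) :
    IsMotifSolution G c M (R'.toRight.map (.subtype _)) := by
  obtain ⟨hconn, hcol⟩ := hR'
  have hcolR : (R'.toRight.map (.subtype _)).val.map c = M := by
    rw [map_val_sumElim, Multiset.map_const', add_comm] at hcol
    rw [map_val, Multiset.map_map]
    exact Multiset.eq_of_add_replicate_eq_add_replicate (by simp [hγc]) hγM hcol
  obtain ⟨d, hd⟩ := Multiset.exists_mem_of_ne_zero hM
  obtain ⟨u, hu, -⟩ := Multiset.mem_map.1 (hcolR ▸ hd)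
  refine ⟨(connected_iff _).2 ⟨?_, ⟨⟨u, hu⟩⟩⟩, hcolR⟩
  exact induce_map_toRight_preconnected_of_cliqueIncidenceGraph hC hconn.preconnected

end CliqueIncidence

theorem stmt_12_general {V D : Type*} (G : SimpleGraph V)
    (c : V → D) (M : Multiset D) (hM : 2 ≤ Multiset.card M)
    (k : ℕ) (C : Fin k → Set V)
    (hclique : ∀ i, G.IsClique (C i))
    (hcover : ∀ u v, G.Adj u v → ∃ i, u ∈ C i ∧ v ∈ C i)
    (γ : D) (hγM : γ ∉ M) (hγc : ∀ v, c v ≠ γ) :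
    (∃ R : Finset V, IsMotifSolution G c M R) ↔
    ∃ T : Finset (Fin k), T.Nonempty ∧
      ∃ R' : Finset ({i // i ∈ T} ⊕ {w // w ∈ ⋃ i ∈ T, C i}),
        IsMotifSolution
          (SimpleGraph.fromRel (fun a b =>
            ∃ (i : {i // i ∈ T}) (w : {w // w ∈ ⋃ i ∈ T, C i}),
              a = Sum.inl i ∧ b = Sum.inr w ∧ (w : V) ∈ C i.val))
          (Sum.elim (fun _ => γ) (fun w => c w))
          (M + Multiset.replicate T.card γ) R' := by
  refine ⟨fun ⟨R, hR⟩ => hR.exists_cliqueIncidenceGraph hM hcover γ, ?_⟩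
  rintro ⟨T, -, R', hR'⟩
  have hM0 : M ≠ 0 := Multiset.card_pos.1 (by omega)
  exact ⟨_, hR'.of_cliqueIncidenceGraph hM0 (fun i _ => hclique i) hγM hγc⟩

/-- Let `M` have at least two elements and `C_1, …, C_k` be an edge
clique cover of `G`. For nonempty `T`, `B_T` is the bipartite graph on `T ⊎ W_T`
(`W_T = ⋃_{i ∈ T} C_i`) with `i` adjacent to `w` iff `w ∈ C_i`; vertices of `T` get a
fresh color `γ` and `M'_T = M + |T|·γ`. Then `(G, c, M)` has a motif solution iff there
is a nonempty `T` such that `(B_T, c'_T, M'_T)` has one. -/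
theorem stmt_12 {V D : Type*} [Fintype V] (G : SimpleGraph V)
    (c : V → D) (M : Multiset D) (hM : 2 ≤ Multiset.card M)
    (k : ℕ) (C : Fin k → Set V)
    (hclique : ∀ i, G.IsClique (C i))
    (hcover : ∀ u v, G.Adj u v → ∃ i, u ∈ C i ∧ v ∈ C i)
    (γ : D) (hγM : γ ∉ M) (hγc : ∀ v, c v ≠ γ) :
    (∃ R : Finset V, IsMotifSolution G c M R) ↔
    ∃ T : Finset (Fin k), T.Nonempty ∧
      ∃ R' : Finset ({i // i ∈ T} ⊕ {w // w ∈ ⋃ i ∈ T, C i}),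
        IsMotifSolution
          (SimpleGraph.fromRel (fun a b =>
            ∃ (i : {i // i ∈ T}) (w : {w // w ∈ ⋃ i ∈ T, C i}),
              a = Sum.inl i ∧ b = Sum.inr w ∧ (w : V) ∈ C i.val))
          (Sum.elim (fun _ => γ) (fun w => c w))
          (M + Multiset.replicate T.card γ) R' :=
  stmt_12_general G c M hM k C hclique hcover γ hγM hγc
end

section
/- Let G be a connected finite simple graph and let G' be a cluster graph (a disjoint union of complete graphs) on the same vertex set such that the symmetric difference of the edge sets of G and G' has at most k edges. Then (1) G' has at most k + 1 connected components, and (2) the neighborhood diversity of G is at most 3k + 1, i.e., V(G) can be partitioned into at most 3k + 1 classes such that any two vertices u, v in the same class satisfy N_G(u) \ {v} = N_G(v) \ {u}. -/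
/-!
Contracting the components of `G'` turns `G` into a connected graph whose edges all come from
edges of `G` missing in `G'`; a connected graph on `c` vertices has at least `c - 1` edges, so `G'`
has at most `k + 1` components. A vertex lying on no edited edge has the same neighbours in `G`
as in `G'`, namely the other vertices of its clique. So two such vertices in the same component
of `G'` are twins in `G`, and giving each of the at most `2k` endpoints of edited edges a class of
its own yields at most `2k + (k + 1)` classes.
-/

lemma Sym2.ncard_setOf_exists_mem_le {V : Type*} {D : Set (Sym2 V)} (hD : D.Finite) :
    {v | ∃ e ∈ D, v ∈ e}.ncard ≤ 2 * D.ncard := by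
  classical
  lift D to Finset (Sym2 V) using hD
  have hD : {v | ∃ e ∈ (D : Set (Sym2 V)), v ∈ e} = ↑(D.biUnion Sym2.toFinset) := by ext; simp
  rw [hD, Set.ncard_coe_finset, Set.ncard_coe_finset]
  calc (D.biUnion Sym2.toFinset).card ≤ ∑ e ∈ D, e.toFinset.card := Finset.card_biUnion_le
    _ ≤ ∑ _e ∈ D, 2 := Finset.sum_le_sum fun e _ => by rw [Sym2.card_toFinset]; split_ifs <;> omega
    _ = 2 * D.card := by rw [Finset.sum_const, smul_eq_mul, mul_comm]

namespace SimpleGraph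

variable {V W : Type*}

def IsClusterGraph (G : SimpleGraph V) : Prop :=
  ∀ u v : V, G.Reachable u v → u ≠ v → G.Adj u v

lemma IsClusterGraph.neighborSet_sdiff_eq {G : SimpleGraph V} (hG : G.IsClusterGraph) {u v : V}
    (h : G.Reachable u v) : G.neighborSet u \ {v} = G.neighborSet v \ {u} := by
  have key : ∀ {u v}, G.Reachable u v → G.neighborSet u \ {v} ⊆ G.neighborSet v \ {u} := by
    rintro u v huv w ⟨huw, hwv : w ≠ v⟩
    exact ⟨hG v w (huv.symm.trans huw.reachable) hwv.symm, huw.ne'⟩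
  exact (key h).antisymm (key h.symm)

lemma neighborSet_eq_of_forall_notMem_symmDiff {G G' : SimpleGraph V} {v : V}
    (h : ∀ e ∈ symmDiff G.edgeSet G'.edgeSet, v ∉ e) : G.neighborSet v = G'.neighborSet v := by
  ext w
  have := h s(v, w)
  simp only [Set.mem_symmDiff, mem_edgeSet, Sym2.mem_mk_left, not_true_eq_false] at this
  simp only [mem_neighborSet]
  tauto

/-- `fromEdgeSet (Sym2.map f '' G.edgeSet)` is the graph obtained from `G` by contracting the
fibres of `f`. -/
lemma Connected.fromEdgeSet_image_map {G : SimpleGraph V} (hG : G.Connected) {f : V → W}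
    (hf : f.Surjective) : (fromEdgeSet (Sym2.map f '' G.edgeSet)).Connected := by
  refine (connected_iff _).2 ⟨fun w₁ w₂ => ?_, hG.nonempty.map f⟩
  obtain ⟨u₁, rfl⟩ := hf w₁
  obtain ⟨u₂, rfl⟩ := hf w₂
  rw [reachable_iff_reflTransGen]
  refine Relation.ReflTransGen.lift' f (fun a b hab => ?_) _ _
    ((reachable_iff_reflTransGen _ _).1 (hG.preconnected u₁ u₂))
  by_cases hfab : f a = f b
  · simp only [Function.onFun, hfab, Relation.ReflTransGen.refl]
  · exact .single ((fromEdgeSet_adj _).2 ⟨⟨s(a, b), hab, rfl⟩, hfab⟩)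

theorem Connected.card_connectedComponent_le [Finite V] {G : SimpleGraph V} (hG : G.Connected)
    (G' : SimpleGraph V) :
    Nat.card G'.ConnectedComponent ≤ (G.edgeSet \ G'.edgeSet).ncard + 1 := by
  set H := fromEdgeSet (Sym2.map G'.connectedComponentMk '' G.edgeSet)
  have hH : H.Connected := hG.fromEdgeSet_image_map (fun c => c.ind fun v => ⟨v, rfl⟩)
  have hsub : H.edgeSet ⊆ Sym2.map G'.connectedComponentMk '' (G.edgeSet \ G'.edgeSet) := by
    rw [edgeSet_fromEdgeSet]
    rintro _ ⟨⟨e, he, rfl⟩, hdiag⟩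
    refine ⟨e, ⟨he, fun he' => hdiag ?_⟩, rfl⟩
    induction e using Sym2.ind with
    | _ a b => simpa using ConnectedComponent.sound (G := G') (Adj.reachable he')
  calc Nat.card G'.ConnectedComponent ≤ Nat.card H.edgeSet + 1 :=
        hH.card_vert_le_card_edgeSet_add_one
    _ ≤ (G.edgeSet \ G'.edgeSet).ncard + 1 := by
        rw [Nat.card_coe_set_eq]
        gcongr
        exact (Set.ncard_le_ncard hsub).trans Set.ncard_image_le

end SimpleGraph

open SimpleGraph

/-- Let `G` be connected and `G'` a cluster graph (every connected
component is complete, i.e. any two distinct reachable vertices are adjacent) on the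
same vertex set, with the symmetric difference of the edge sets having at most `k`
edges. Then (1) `G'` has at most `k + 1` connected components, and (2) the neighborhood
diversity of `G` is at most `3k + 1`: `V` can be partitioned into at most `3k + 1`
classes such that any two vertices `u, v` in the same class satisfy
`N_G(u) \ {v} = N_G(v) \ {u}`. -/
theorem stmt_13 {V : Type*} [Fintype V] (G G' : SimpleGraph V) (k : ℕ)
    (hGconn : G.Connected)
    (hcluster : ∀ u v : V, G'.Reachable u v → u ≠ v → G'.Adj u v)
    (hedit : (symmDiff G.edgeSet G'.edgeSet).ncard ≤ k) :
    Nat.card G'.ConnectedComponent ≤ k + 1 ∧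
    ∃ (d : ℕ) (f : V → Fin d), d ≤ 3 * k + 1 ∧
      ∀ u v : V, f u = f v → G.neighborSet u \ {v} = G.neighborSet v \ {u} := by
  classical
  set D := symmDiff G.edgeSet G'.edgeSet
  have hcomp : Nat.card G'.ConnectedComponent ≤ k + 1 := by
    have hsdiff : (G.edgeSet \ G'.edgeSet).ncard ≤ k :=
      (Set.ncard_le_ncard fun _ he => Set.mem_symmDiff.2 (.inl he)).trans hedit
    exact (hGconn.card_connectedComponent_le G').trans (by omega)
  set T : Set V := {v | ∃ e ∈ D, v ∈ e}
  have hT : Nat.card T ≤ 2 * k := by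
    rw [Nat.card_coe_set_eq]
    exact (Sym2.ncard_setOf_exists_mem_le (Set.toFinite D)).trans (by omega)
  let f : V → T ⊕ G'.ConnectedComponent := fun v =>
    if h : v ∈ T then .inl ⟨v, h⟩ else .inr (G'.connectedComponentMk v)
  refine ⟨hcomp, _, Finite.equivFin _ ∘ f, by rw [Nat.card_sum]; omega, fun u v huv => ?_⟩
  replace huv := (Finite.equivFin _).injective huv
  by_cases hu : u ∈ T <;> by_cases hv : v ∈ T <;>
    simp only [f, hu, hv, dite_true, dite_false, Sum.inl.injEq, Subtype.mk.injEq, reduceCtorEq,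
      Sum.inr.injEq, ConnectedComponent.eq] at huv
  · rw [huv]
  · simp only [T, Set.mem_ofPred_eq, not_exists, not_and] at hu hv
    rw [neighborSet_eq_of_forall_notMem_symmDiff hu, neighborSet_eq_of_forall_notMem_symmDiff hv]
    exact IsClusterGraph.neighborSet_sdiff_eq hcluster huv
end
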